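/- arXiv:1504.04408 — 4 statements merged into one kernel-verified Lean document; each statement's English description precedes it below -/
import Mathlib

section
/- Let n ∈ ℕ and let m be the smallest non-negative integer with √n ≤ 2^m. If j ≥ 1 and k ∈ ℤⁿ satisfies 2^{j−1} < |k| < 2^{j+1} (Euclidean norm), then k ∈ D_d for some integer d with n(j−m−1)+1 ≤ d ≤ n(j+1), where D_d is interpreted as D_0 when d ≤ 0. Equivalently, every integer point in the open annulus {x : 2^{j−1} < |x| < 2^{j+1}} belongs to the union ⋃_{d=n(j−m−1)+1}^{n(j+1)} D_d (with D_d := D_0 for d ≤ 0). -/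
/-- The coarse decomposition of `ℤⁿ`: `D_0 = {0}`, and for `d = n·r + l ≥ 1`
(`r ∈ ℕ₀`, `l ∈ {1,…,n}`, here encoded with the 0-based index `(d-1) % n` and
`r = (d-1) / n`): `|k_i| < 2^(r+1)` for `i < l`, `2^r ≤ |k_l| < 2^(r+1)`, and
`|k_i| < 2^r` for `i > l`. -/
def coarseD (n : ℕ) (d : ℕ) : Set (Fin n → ℤ) :=
  if d = 0 then {0}
  else
    {k | ∀ i : Fin n,
      ((i : ℕ) < (d - 1) % n → |k i| < 2 ^ ((d - 1) / n + 1)) ∧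
      ((i : ℕ) = (d - 1) % n → 2 ^ ((d - 1) / n) ≤ |k i| ∧ |k i| < 2 ^ ((d - 1) / n + 1)) ∧
      ((d - 1) % n < (i : ℕ) → |k i| < 2 ^ ((d - 1) / n))}

/-- `D_d` for `d ∈ ℤ`, with `D_d := D_0` for `d ≤ 0`. -/
def coarseDZ (n : ℕ) (d : ℤ) : Set (Fin n → ℤ) := coarseD n d.toNat

/-- The Euclidean norm of an integer vector. -/
noncomputable def znorm (n : ℕ) (k : Fin n → ℤ) : ℝ :=
  Real.sqrt (∑ i, ((k i : ℝ)) ^ 2)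

/-- Lemma 5.8 a): if `m` is the smallest non-negative integer with `√n ≤ 2^m`,
`j ≥ 1`, and `k ∈ ℤⁿ` satisfies `2^(j-1) < |k| < 2^(j+1)` (Euclidean norm), then
`k ∈ D_d` for some `d` with `n(j-m-1)+1 ≤ d ≤ n(j+1)` (where `D_d = D_0` for `d ≤ 0`). -/
theorem statement1 (n : ℕ) (hn : 0 < n) (m : ℕ)
    (hm : Real.sqrt n ≤ 2 ^ m) (hmin : ∀ m' : ℕ, Real.sqrt n ≤ 2 ^ m' → m ≤ m')
    (j : ℕ) (hj : 1 ≤ j) (k : Fin n → ℤ)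
    (h1 : (2 : ℝ) ^ (j - 1) < znorm n k) (h2 : znorm n k < 2 ^ (j + 1)) :
    ∃ d : ℤ, (n : ℤ) * ((j : ℤ) - (m : ℤ) - 1) + 1 ≤ d ∧ d ≤ (n : ℤ) * ((j : ℤ) + 1) ∧
      k ∈ coarseDZ n d := by

  classical
  have hk0 : k ≠ 0 := by
    intro h
    have h0 : znorm n k = 0 := by simp [znorm, h]
    have hp : (0:ℝ) < 2 ^ (j-1) := by positivity
    rw [h0] at h1
    linarith
  obtain ⟨i₀, hi₀⟩ := Function.ne_iff.mp hk0
  set M : ℕ := Finset.univ.sup (fun i => (k i).natAbs) with hMdef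
  have hle : ∀ i, (k i).natAbs ≤ M := fun i => Finset.le_sup (f := fun i => (k i).natAbs) (Finset.mem_univ i)
  have hM1 : 1 ≤ M := by
    have h0 : 1 ≤ (k i₀).natAbs := Int.natAbs_pos.mpr (by simpa using hi₀)
    exact le_trans h0 (hle i₀)
  set r : ℕ := Nat.log 2 M with hrdef
  have hrle : 2 ^ r ≤ M := Nat.pow_log_le_self 2 (by omega)
  have hrlt : M < 2 ^ (r+1) := Nat.lt_pow_succ_log_self one_lt_two M
  obtain ⟨i₁, -, hi₁⟩ := Finset.exists_mem_eq_sup Finset.univ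
    ⟨i₀, Finset.mem_univ i₀⟩ (fun i => (k i).natAbs)
  set S := Finset.univ.filter (fun i => 2 ^ r ≤ (k i).natAbs) with hSdef
  have hSne : S.Nonempty := by
    refine ⟨i₁, ?_⟩
    simp only [hSdef, Finset.mem_filter, Finset.mem_univ, true_and]
    omega
  set l := S.max' hSne with hldef
  have hlmem : l ∈ S := S.max'_mem hSne
  have hlr : 2 ^ r ≤ (k l).natAbs := by
    simpa [hSdef] using hlmem
  have hgt : ∀ i : Fin n, l < i → (k i).natAbs < 2 ^ r := by
    intro i hi
    by_contra h
    push_neg at h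
    exact absurd (S.le_max' i (by simp [hSdef, h])) (not_le.mpr hi)
  -- real facts
  have habsle : ∀ i, |(k i : ℝ)| ≤ (M:ℝ) := by
    intro i
    have := hle i
    calc |(k i : ℝ)| = ((k i).natAbs : ℝ) := by rw [Nat.cast_natAbs, Int.cast_abs]
      _ ≤ (M:ℝ) := by exact_mod_cast this
  have hMnorm : (M:ℝ) ≤ znorm n k := by
    rw [znorm, Real.le_sqrt (by positivity) (Finset.sum_nonneg fun i _ => sq_nonneg _)]
    calc (M:ℝ)^2 = ((k i₁).natAbs : ℝ)^2 := by rw [← hi₁]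
      _ = (k i₁ : ℝ)^2 := by rw [Nat.cast_natAbs, Int.cast_abs, sq_abs]
      _ ≤ ∑ i, (k i : ℝ)^2 := Finset.single_le_sum (f := fun i => ((k i : ℝ))^2)
            (fun i _ => sq_nonneg _) (Finset.mem_univ i₁)
  have hMlt : M < 2 ^ (j+1) := by
    have : (M:ℝ) < 2 ^ (j+1) := lt_of_le_of_lt hMnorm h2
    exact_mod_cast this
  have hrj : r < j + 1 := by
    have : (2:ℕ)^r < 2^(j+1) := lt_of_le_of_lt hrle hMlt
    exact (Nat.pow_lt_pow_iff_right one_lt_two).mp this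
  -- lower bound fact: j ≤ m + r + 1
  have hnorm_le : znorm n k ≤ 2^m * (M:ℝ) := by
    have hsum : ∑ i, ((k i:ℝ))^2 ≤ (n:ℝ) * (M:ℝ)^2 := by
      calc ∑ i, (k i:ℝ)^2 ≤ ∑ _i : Fin n, (M:ℝ)^2 :=
            Finset.sum_le_sum (fun i _ => by
              have := habsle i
              nlinarith [abs_nonneg (k i : ℝ), sq_abs (k i : ℝ)])
        _ = (n:ℝ) * (M:ℝ)^2 := by simp [mul_comm]
    calc znorm n k ≤ Real.sqrt ((n:ℝ) * (M:ℝ)^2) := Real.sqrt_le_sqrt hsum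
      _ = Real.sqrt n * (M:ℝ) := by
          rw [Real.sqrt_mul (by positivity), Real.sqrt_sq (by positivity)]
      _ ≤ 2^m * (M:ℝ) := by
          apply mul_le_mul_of_nonneg_right hm (by positivity)
  have hjmr : j ≤ m + r + 1 := by
    have hMr : (M:ℝ) < 2^(r+1) := by exact_mod_cast hrlt
    have h2m : (0:ℝ) < 2^m := by positivity
    have : (2:ℝ)^(j-1) < 2^(m+(r+1)) := by
      calc (2:ℝ)^(j-1) < 2^m * (M:ℝ) := lt_of_lt_of_le h1 hnorm_le
        _ < 2^m * 2^(r+1) := by nlinarith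
        _ = 2^(m+(r+1)) := by rw [pow_add, pow_add]; ring
    have := (pow_lt_pow_iff_right₀ one_lt_two).mp this
    omega
  -- the witness
  set dn : ℕ := n * r + l + 1 with hddef
  refine ⟨(dn : ℤ), ?_, ?_, ?_⟩
  · have hjr : (j:ℤ) - m - 1 ≤ (r:ℤ) := by
      have : (j:ℤ) ≤ m + r + 1 := by exact_mod_cast hjmr
      omega
    have := mul_le_mul_of_nonneg_left hjr (by positivity : (0:ℤ) ≤ (n:ℤ))
    have hl0 : (0:ℤ) ≤ (l:ℤ) := by positivity
    push_cast [hddef]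
    linarith
  · have hln : (l:ℕ) < n := l.isLt
    have : dn ≤ n * (j+1) := by
      calc dn = n * r + l + 1 := hddef
        _ ≤ n * r + n := by omega
        _ = n * (r+1) := by ring
        _ ≤ n * (j+1) := Nat.mul_le_mul_left n hrj
    exact_mod_cast this
  · have htn : ((dn:ℤ)).toNat = dn := Int.toNat_natCast dn
    rw [coarseDZ, htn]
    have hdn0 : dn ≠ 0 := by omega
    have hln : (l:ℕ) < n := l.isLt
    have hmod : (dn - 1) % n = (l:ℕ) := by
      rw [hddef]
      simp [Nat.add_sub_cancel, Nat.mul_add_mod, Nat.mod_eq_of_lt hln]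
    have hdiv : (dn - 1) / n = r := by
      rw [hddef]
      simp [Nat.add_sub_cancel, Nat.mul_add_div hn, Nat.div_eq_of_lt hln]
    rw [coarseD, if_neg hdn0]
    intro i
    rw [hmod, hdiv]
    have habs : ∀ a : ℤ, |a| = ((a.natAbs : ℕ) : ℤ) := fun a => Int.abs_eq_natAbs a
    refine ⟨fun _ => ?_, fun hi => ?_, fun hi => ?_⟩
    · rw [habs]
      have : (k i).natAbs < 2^(r+1) := lt_of_le_of_lt (hle i) hrlt
      exact_mod_cast this
    · have hieq : i = l := Fin.ext hi
      constructor
      · rw [habs, hieq]; exact_mod_cast hlr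
      · rw [habs]
        have : (k i).natAbs < 2^(r+1) := lt_of_le_of_lt (hle i) hrlt
        exact_mod_cast this
    · rw [habs]
      have : (k i).natAbs < 2^r := hgt i hi
      exact_mod_cast this
end

section
/- Let V be an additive commutative group, M : ℤⁿ → V a function, and α, β ∈ ℤⁿ with α ≤ β componentwise. Then M(β) = Σ_{ξ ∈ [α,β]} (Δ^{γ_ξ} M_{[α,β]})(ξ). -/
open Finset


/-- The restriction `M_{[α,β]}` of `M` to the box `[α,β] ⊆ ℤⁿ` (zero outside). -/
noncomputable def restrictBox {n : ℕ} {V : Type*} [AddCommGroup V] (α β : Fin n → ℤ)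
    (M : (Fin n → ℤ) → V) : (Fin n → ℤ) → V :=
  fun k => if k ∈ Finset.Icc α β then M k else 0

/-- The difference operator `Δ^{δ_j}` relative to the left endpoint `α`:
`(Δ^{δ_j} F)(x) = F(x) - F(x - δ_j)` if `x_j ≠ α_j`, and `0` if `x_j = α_j`. -/
def dOp {n : ℕ} {V : Type*} [AddCommGroup V] (α : Fin n → ℤ) (j : Fin n)
    (F : (Fin n → ℤ) → V) : (Fin n → ℤ) → V :=
  fun x => if x j = α j then 0 else F x - F (x - Pi.single j 1)

/-- `Δ^γ` for `γ ∈ {0,1}ⁿ`: the composition `Δ^{γ₁δ₁} ⋯ Δ^{γₙδₙ}` of the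
operators `Δ^{δ_j}` over those `j` with `γ_j = 1`. -/
def dGamma {n : ℕ} {V : Type*} [AddCommGroup V] (α : Fin n → ℤ) (γ : Fin n → Bool)
    (F : (Fin n → ℤ) → V) : (Fin n → ℤ) → V :=
  ((List.finRange n).filter (fun j => γ j)).foldr (dOp α) F

section Aux
variable {n : ℕ} {V : Type*} [AddCommGroup V]



lemma tele (a b : ℤ) (hab : a ≤ b) (f : ℤ → V) :
    f a + ∑ t ∈ Finset.Icc (a+1) b, (f t - f (t-1)) = f b := by
  refine Int.le_induction (motive := fun b _ => f a + ∑ t ∈ Finset.Icc (a+1) b, (f t - f (t-1)) = f b) ?_ ?_ b hab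
  · simp
  · intro b hb ih
    have h1 : Finset.Icc (a+1) (b+1) = insert (b+1) (Finset.Icc (a+1) b) := by
      ext x; simp [Finset.mem_Icc]; omega
    rw [h1, Finset.sum_insert (by simp), ← add_assoc, add_comm (f a), add_assoc, ih]
    have h2 : b + 1 - 1 = b := by ring
    rw [h2]; abel

lemma key (M : (Fin n → ℤ) → V) (α β : Fin n → ℤ) (hαβ : α ≤ β)
    (L : List (Fin n)) (hL : L.Nodup) :
    M β = ∑ ξ ∈ (Finset.Icc α β).filter (fun ξ => ∀ j, j ∉ L → ξ j = β j),
      (L.filter (fun j => decide (ξ j ≠ α j))).foldr (dOp α) M ξ := by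
  induction L with
  | nil =>
    have h : (Finset.Icc α β).filter (fun ξ => ∀ j, j ∉ ([] : List (Fin n)) → ξ j = β j) = {β} := by
      ext ξ
      simp only [Finset.mem_filter, Finset.mem_Icc, Finset.mem_singleton, List.not_mem_nil]
      constructor
      · rintro ⟨_, h⟩; funext j; simpa using h j (by simp)
      · rintro rfl; exact ⟨⟨hαβ, le_refl _⟩, fun j _ => rfl⟩
    rw [h]; simp
  | cons i L ih =>
    have hiL : i ∉ L := (List.nodup_cons.mp hL).1
    have hLnd : L.Nodup := (List.nodup_cons.mp hL).2
    have hab : α i ≤ β i := hαβ i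
    set T := (Finset.Icc α β).filter (fun ξ => ∀ j, j ∉ L → ξ j = β j) with hT
    set S := (Finset.Icc α β).filter (fun ξ => ∀ j, j ∉ (i :: L) → ξ j = β j) with hS
    -- bijection between S and T ×ˢ Icc (α i) (β i)
    have hsum : ∑ ξ ∈ S, (( (i :: L).filter (fun j => decide (ξ j ≠ α j))).foldr (dOp α) M) ξ
        = ∑ p ∈ T ×ˢ Finset.Icc (α i) (β i),
            (( (i :: L).filter (fun j => decide ((Function.update p.1 i p.2) j ≠ α j))).foldr (dOp α) M)
              (Function.update p.1 i p.2) := by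
      refine Finset.sum_nbij' (fun ξ => (Function.update ξ i (β i), ξ i))
        (fun p => Function.update p.1 i p.2) ?_ ?_ ?_ ?_ ?_
      · intro ξ hξ
        simp only [hS, Finset.mem_filter, Finset.mem_Icc] at hξ
        obtain ⟨⟨h1, h2⟩, h3⟩ := hξ
        simp only [Finset.mem_product, hT, Finset.mem_filter, Finset.mem_Icc]
        refine ⟨⟨⟨?_, ?_⟩, ?_⟩, h1 i, h2 i⟩
        · intro j; by_cases hj : j = i
          · subst hj; simp [hab]
          · simp [Function.update_of_ne hj]; exact h1 j
        · intro j; by_cases hj : j = i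
          · subst hj; simp
          · simp [Function.update_of_ne hj]; exact h2 j
        · intro j hj; by_cases hji : j = i
          · subst hji; simp
          · rw [Function.update_of_ne hji]
            exact h3 j (by simp [hji, hj])
      · intro p hp
        simp only [Finset.mem_product, hT, Finset.mem_filter, Finset.mem_Icc] at hp
        obtain ⟨⟨⟨h1, h2⟩, h3⟩, h4, h5⟩ := hp
        simp only [hS, Finset.mem_filter, Finset.mem_Icc]
        refine ⟨⟨?_, ?_⟩, ?_⟩
        · intro j; by_cases hj : j = i
          · subst hj; simp [h4]
          · simp [Function.update_of_ne hj]; exact h1 j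
        · intro j; by_cases hj : j = i
          · subst hj; simp [h5]
          · simp [Function.update_of_ne hj]; exact h2 j
        · intro j hj
          have hji : j ≠ i := by intro h; subst h; simp at hj
          rw [Function.update_of_ne hji]
          exact h3 j (fun hjL => hj (List.mem_cons_of_mem _ hjL))
      · intro ξ hξ
        simp
      · intro p hp
        simp only [Finset.mem_product, hT, Finset.mem_filter] at hp
        have h1 : p.1 i = β i := hp.1.2 i hiL
        show (Function.update (Function.update p.1 i p.2) i (β i),
              (Function.update p.1 i p.2) i) = p
        refine Prod.ext ?_ (Function.update_self _ _ _)
        funext j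
        by_cases hj : j = i
        · subst hj; simp [h1]
        · simp [Function.update_of_ne hj]
      · intro ξ hξ
        simp
    rw [hsum, Finset.sum_product]
    -- now compute the inner sum over t for fixed η ∈ T
    have hinner : ∀ η ∈ T,
        ∑ t ∈ Finset.Icc (α i) (β i),
          (( (i :: L).filter (fun j => decide ((Function.update η i t) j ≠ α j))).foldr (dOp α) M)
            (Function.update η i t)
        = ((L.filter (fun j => decide (η j ≠ α j))).foldr (dOp α) M) η := by
      intro η hη
      simp only [hT, Finset.mem_filter] at hη
      have hηi : η i = β i := hη.2 i hiL
      set G := (L.filter (fun j => decide (η j ≠ α j))).foldr (dOp α) M with hG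
      have hfilt : ∀ t : ℤ, (L.filter (fun j => decide ((Function.update η i t) j ≠ α j)))
          = L.filter (fun j => decide (η j ≠ α j)) := by
        intro t
        apply List.filter_congr
        intro j hj
        have : j ≠ i := fun h => hiL (h ▸ hj)
        rw [Function.update_of_ne this]
      have hterm : ∀ t : ℤ,
          (( (i :: L).filter (fun j => decide ((Function.update η i t) j ≠ α j))).foldr (dOp α) M)
            (Function.update η i t)
          = if t = α i then G (Function.update η i t)
            else G (Function.update η i t) - G (Function.update η i (t-1)) := by
        intro t
        rw [List.filter_cons, hfilt t]
        by_cases ht : t = α i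
        · rw [if_pos ht, if_neg (by simp [ht])]
        · rw [if_neg ht, if_pos (by simp [ht])]
          show dOp α i G (Function.update η i t) = _
          rw [dOp]
          simp only [Function.update_self, if_neg ht]
          congr 1
          congr 1
          funext j
          by_cases hj : j = i
          · subst hj; simp
          · simp [Function.update_of_ne hj, Pi.single_eq_of_ne hj]
      calc ∑ t ∈ Finset.Icc (α i) (β i),
            (( (i :: L).filter (fun j => decide ((Function.update η i t) j ≠ α j))).foldr (dOp α) M)
              (Function.update η i t)
          = ∑ t ∈ Finset.Icc (α i) (β i),
              (if t = α i then G (Function.update η i t)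
               else G (Function.update η i t) - G (Function.update η i (t-1))) := by
            exact Finset.sum_congr rfl (fun t _ => hterm t)
        _ = G (Function.update η i (α i)) + ∑ t ∈ Finset.Icc (α i + 1) (β i),
              (G (Function.update η i t) - G (Function.update η i (t-1))) := by
            have hsplit : Finset.Icc (α i) (β i) = insert (α i) (Finset.Icc (α i + 1) (β i)) := by
              ext x; simp [Finset.mem_Icc]; omega
            rw [hsplit, Finset.sum_insert (by simp [Finset.mem_Icc])]
            simp only [if_pos rfl]
            congr 1
            refine Finset.sum_congr rfl (fun t ht => ?_)
            simp only [Finset.mem_Icc] at ht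
            rw [if_neg (by omega)]
        _ = G (Function.update η i (β i)) := tele (α i) (β i) hab (fun t => G (Function.update η i t))
        _ = G η := by rw [← hηi, Function.update_eq_self]
    rw [Finset.sum_congr rfl hinner]
    exact ih hLnd

end Aux

/-- Remark 5.3 (telescoping): for `α ≤ β` in `ℤⁿ`,
`M(β) = Σ_{ξ ∈ [α,β]} (Δ^{γ_ξ} M_{[α,β]})(ξ)`, where `(γ_ξ)_j = 1` iff `ξ_j ≠ α_j`. -/

theorem statement3 {n : ℕ} {V : Type*} [AddCommGroup V] (M : (Fin n → ℤ) → V)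
    (α β : Fin n → ℤ) (hαβ : α ≤ β) :
    M β = ∑ ξ ∈ Finset.Icc α β,
      dGamma α (fun j => decide (ξ j ≠ α j)) (restrictBox α β M) ξ := by
  have hβ : β ∈ Finset.Icc α β := by simp [Finset.mem_Icc, hαβ]
  have hfull : (Finset.Icc α β).filter
      (fun ξ => ∀ j, j ∉ List.finRange n → ξ j = β j) = Finset.Icc α β := by
    apply Finset.filter_true_of_mem
    intro ξ _ j hj
    exact absurd (List.mem_finRange j) hj
  have h := key (restrictBox α β M) α β hαβ (List.finRange n) (List.nodup_finRange n)
  rw [hfull] at h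
  have hMβ : restrictBox α β M β = M β := by
    simp [restrictBox, hβ]
  rw [← hMβ, h]
  rfl
end

section
/- Let n ∈ ℕ, s ∈ ℝ, 1 < p < ∞, 1 ≤ q ≤ ∞, and let E be a complex Banach space such that the Riesz multiplier R : ℤⁿ → 𝓛(E) (R(k) = I_E if k ≥ 0 componentwise, 0 otherwise) is a discrete L^p-Fourier multiplier. Let (φ_j)_{j∈ℕ₀} ∈ Φ(ℝⁿ) be a resolution of unity and let M : ℤⁿ → 𝓛(E) be uniformly bounded and of bounded variation with respect to the coarse decomposition of ℤⁿ. Then there exists C > 0 such that for every finitely supported family (x_k)_{k∈ℤⁿ} in E: ‖(M(k)x_k)_k‖_{B^{s,φ}_{p,q}} ≤ C ‖(x_k)_k‖_{B^{s,φ}_{p,q}} (this is the 'if' half of the main theorem, stated for E-valued trigonometric polynomials). -/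
open MeasureTheory

/-- The character `e_k(t) = e^{i k·t}` on the `n`-torus. -/
noncomputable def ek (n : ℕ) (k : Fin n → ℤ) (t : Fin n → ℝ) : ℂ :=
  Complex.exp (Complex.I * ∑ i, (k i : ℂ) * (t i : ℂ))

/-- `‖g‖_{L^p(𝕋ⁿ,E)} = ((2π)^{-n} ∫_{[0,2π]ⁿ} ‖g(t)‖^p dt)^{1/p}` for `1 ≤ p < ∞`. -/
noncomputable def pnorm (n : ℕ) (p : ℝ) {E : Type*} [NormedAddCommGroup E]
    (g : (Fin n → ℝ) → E) : ℝ :=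
  (((2 * Real.pi) ^ n)⁻¹ *
      ∫ t in Set.Icc (0 : Fin n → ℝ) (fun _ => 2 * Real.pi), ‖g t‖ ^ p) ^ (1 / p)

/-- `M : ℤⁿ → 𝓛(E)` is a discrete `L^p`-Fourier multiplier with constant `C`:
for every finitely supported family `(x_k)` in `E`,
`‖Σ_k e^{ik·t} M(k)x_k‖_{L^p(𝕋ⁿ,E)} ≤ C ‖Σ_k e^{ik·t} x_k‖_{L^p(𝕋ⁿ,E)}`. -/
def IsMult (n : ℕ) (p : ℝ) {E : Type*} [NormedAddCommGroup E] [NormedSpace ℂ E]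
    (M : (Fin n → ℤ) → (E →L[ℂ] E)) (C : ℝ) : Prop :=
  ∀ x : (Fin n → ℤ) → E, (Function.support x).Finite →
    pnorm n p (fun t => ∑ᶠ k, ek n k t • (M k) (x k)) ≤
      C * pnorm n p (fun t => ∑ᶠ k, ek n k t • x k)

/-- The Riesz projection multiplier `R(k) = I_E` for `k ≥ 0` (componentwise), `0` otherwise. -/
noncomputable def Riesz (n : ℕ) (E : Type*) [NormedAddCommGroup E] [NormedSpace ℂ E] :
    (Fin n → ℤ) → (E →L[ℂ] E) :=
  fun k => if ∀ i, 0 ≤ k i then ContinuousLinearMap.id ℂ E else 0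

/-- The multiplier `N(k) = I_E` for `k ≤ 0` (componentwise), `0` otherwise. -/
noncomputable def RieszNeg (n : ℕ) (E : Type*) [NormedAddCommGroup E] [NormedSpace ℂ E] :
    (Fin n → ℤ) → (E →L[ℂ] E) :=
  fun k => if ∀ i, k i ≤ 0 then ContinuousLinearMap.id ℂ E else 0

/-- `Ω_j`: the closed ball of radius 2 for `j = 0` and the closed annulus
`{x : 2^(j-1) ≤ |x| ≤ 2^(j+1)}` for `j ≥ 1` (Euclidean norm). -/
def OmegaSet (n : ℕ) (j : ℕ) : Set (EuclideanSpace ℝ (Fin n)) :=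
  if j = 0 then {x | ‖x‖ ≤ 2}
  else {x | (2 : ℝ) ^ (j - 1) ≤ ‖x‖ ∧ ‖x‖ ≤ (2 : ℝ) ^ (j + 1)}

/-- `(φ_j) ∈ Φ(ℝⁿ)`: a resolution of unity. -/
def IsResolution (n : ℕ) (φ : ℕ → SchwartzMap (EuclideanSpace ℝ (Fin n)) ℝ) : Prop :=
  (∀ j, tsupport (φ j) ⊆ OmegaSet n j) ∧
  (∀ ξ : EuclideanSpace ℝ (Fin n), HasSum (fun j => φ j ξ) 1) ∧
  (∀ N : ℕ, ∃ C > (0 : ℝ), ∀ (j : ℕ) (ξ : EuclideanSpace ℝ (Fin n)),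
    ‖iteratedFDeriv ℝ N (φ j) ξ‖ ≤
      C * (2 : ℝ) ^ (-((j * N : ℕ) : ℤ)) * (OmegaSet n j).indicator (fun _ => (1 : ℝ)) ξ)

/-- The canonical inclusion `ℤⁿ ⊆ ℝⁿ` (with the Euclidean structure). -/
noncomputable def zToR (n : ℕ) (k : Fin n → ℤ) : EuclideanSpace ℝ (Fin n) :=
  (WithLp.equiv 2 (Fin n → ℝ)).symm (fun i => (k i : ℝ))

/-- `Var_{[α,β]} M_{[α,β]} = Σ_{ξ∈[α,β]} ‖(Δ^{γ_ξ} M_{[α,β]})(ξ)‖`. -/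
noncomputable def varBox {n : ℕ} {V : Type*} [NormedAddCommGroup V] (α β : Fin n → ℤ)
    (M : (Fin n → ℤ) → V) : ℝ :=
  ∑ ξ ∈ Finset.Icc α β, ‖dGamma α (fun j => decide (ξ j ≠ α j)) (restrictBox α β M) ξ‖

/-- Left endpoint of the box `D_{d+}` (for `d ≥ 1`, `r = (d-1)/n`, 0-based `l = (d-1)%n`). -/
def boxPlusLo (n d : ℕ) : Fin n → ℤ := fun i =>
  if (i : ℕ) < (d - 1) % n then -(2 ^ ((d - 1) / n + 1)) + 1
  else if (i : ℕ) = (d - 1) % n then 2 ^ ((d - 1) / n)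
  else -(2 ^ ((d - 1) / n)) + 1

/-- Right endpoint of the box `D_{d+}`. -/
def boxPlusHi (n d : ℕ) : Fin n → ℤ := fun i =>
  if (i : ℕ) ≤ (d - 1) % n then 2 ^ ((d - 1) / n + 1) - 1
  else 2 ^ ((d - 1) / n) - 1

/-- Left endpoint of the box `D_{d-}`. -/
def boxMinusLo (n d : ℕ) : Fin n → ℤ := fun i =>
  if (i : ℕ) ≤ (d - 1) % n then -(2 ^ ((d - 1) / n + 1)) + 1
  else -(2 ^ ((d - 1) / n)) + 1

/-- Right endpoint of the box `D_{d-}`. -/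
def boxMinusHi (n d : ℕ) : Fin n → ℤ := fun i =>
  if (i : ℕ) < (d - 1) % n then 2 ^ ((d - 1) / n + 1) - 1
  else if (i : ℕ) = (d - 1) % n then -(2 ^ ((d - 1) / n))
  else 2 ^ ((d - 1) / n) - 1

/-- `Var_{D_d} M`: for `d ≥ 1` the sum of the variations on the boxes `D_{d+}`
and `D_{d-}`; for `d = 0` the variation on `D_0 = {0} = [0,0]`. -/
noncomputable def varD {V : Type*} [NormedAddCommGroup V] (n : ℕ) (d : ℕ)
    (M : (Fin n → ℤ) → V) : ℝ :=
  if d = 0 then varBox 0 0 M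
  else varBox (boxPlusLo n d) (boxPlusHi n d) M + varBox (boxMinusLo n d) (boxMinusHi n d) M

open scoped ENNReal

/-- The periodic Besov expression `‖(x_k)‖_{B^{s,φ}_{p,q}}` of a (finitely supported)
family `(x_k)_{k∈ℤⁿ}` in `E`:
`(Σ_j 2^{sjq} ‖Σ_k e^{ik·t} φ_j(k) x_k‖_{L^p(𝕋ⁿ,E)}^q)^{1/q}` for `q < ∞`,
and `sup_j 2^{sj} ‖Σ_k e^{ik·t} φ_j(k) x_k‖_{L^p(𝕋ⁿ,E)}` for `q = ∞`. -/
noncomputable def besov (n : ℕ) (s p : ℝ) (q : ℝ≥0∞)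
    (φ : ℕ → SchwartzMap (EuclideanSpace ℝ (Fin n)) ℝ) {E : Type*}
    [NormedAddCommGroup E] [NormedSpace ℂ E] (x : (Fin n → ℤ) → E) : ℝ :=
  if q = ∞ then
    ⨆ j : ℕ, (2 : ℝ) ^ (s * j) *
      pnorm n p (fun t => ∑ᶠ k, ek n k t • (φ j (zToR n k) • x k))
  else
    (∑' j : ℕ, ((2 : ℝ) ^ (s * j) *
      pnorm n p (fun t => ∑ᶠ k, ek n k t • (φ j (zToR n k) • x k))) ^ q.toReal) ^ (1 / q.toReal)

set_option linter.unusedSectionVars false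

section
variable {n : ℕ} {E : Type*} [NormedAddCommGroup E] [NormedSpace ℂ E]

namespace S13

noncomputable def tmu (n : ℕ) : Measure (Fin n → ℝ) :=
  volume.restrict (Set.Icc (0 : Fin n → ℝ) (fun _ => 2 * Real.pi))

lemma pnorm_def (p : ℝ) (g : (Fin n → ℝ) → E) :
    pnorm n p g = (((2 * Real.pi) ^ n)⁻¹ * ∫ t, ‖g t‖ ^ p ∂(tmu n)) ^ (1 / p) := rfl

lemma cpos : (0:ℝ) < ((2 * Real.pi) ^ n)⁻¹ := by positivity

lemma pnorm_nonneg (p : ℝ) (g : (Fin n → ℝ) → E) : 0 ≤ pnorm n p g := by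
  rw [pnorm_def]
  apply Real.rpow_nonneg
  exact mul_nonneg cpos.le (integral_nonneg fun t => Real.rpow_nonneg (norm_nonneg _) p)

lemma pnorm_zero {p : ℝ} (hp : 0 < p) : pnorm n p (fun _ => (0:E)) = 0 := by
  rw [pnorm_def]
  simp [Real.zero_rpow hp.ne', Real.zero_rpow (inv_ne_zero hp.ne')]

lemma pnorm_congr (p : ℝ) {f g : (Fin n → ℝ) → E} (h : ∀ t, ‖f t‖ = ‖g t‖) :
    pnorm n p f = pnorm n p g := by
  rw [pnorm_def, pnorm_def]
  congr 2
  exact integral_congr_ae (Filter.Eventually.of_forall fun t => by simp only [h t])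

lemma pnorm_eq_eLpNorm {p : ℝ} (hp : 0 < p) {g : (Fin n → ℝ) → E}
    (hg : MemLp g (ENNReal.ofReal p) (tmu n)) :
    pnorm n p g = (((2 * Real.pi) ^ n)⁻¹) ^ (1/p) *
      (eLpNorm g (ENNReal.ofReal p) (tmu n)).toReal := by
  rw [hg.eLpNorm_eq_integral_rpow_norm (by simpa using hp) ENNReal.ofReal_ne_top]
  rw [ENNReal.toReal_ofReal (by
    apply Real.rpow_nonneg
    exact integral_nonneg fun t => Real.rpow_nonneg (norm_nonneg _) _)]
  rw [pnorm_def, ENNReal.toReal_ofReal hp.le,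
    Real.mul_rpow cpos.le (integral_nonneg fun t => Real.rpow_nonneg (norm_nonneg _) _), one_div]

lemma pnorm_add_le {p : ℝ} (hp : 1 ≤ p) {f g : (Fin n → ℝ) → E}
    (hf : MemLp f (ENNReal.ofReal p) (tmu n)) (hg : MemLp g (ENNReal.ofReal p) (tmu n)) :
    pnorm n p (fun t => f t + g t) ≤ pnorm n p f + pnorm n p g := by
  have hp0 : (0:ℝ) < p := lt_of_lt_of_le one_pos hp
  have hfg : (fun t => f t + g t) = f + g := rfl
  rw [hfg, pnorm_eq_eLpNorm hp0 (hf.add hg), pnorm_eq_eLpNorm hp0 hf, pnorm_eq_eLpNorm hp0 hg,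
    ← mul_add]
  have h1 : (1:ℝ≥0∞) ≤ ENNReal.ofReal p := by
    rw [show (1:ℝ≥0∞) = ENNReal.ofReal 1 by simp]
    exact ENNReal.ofReal_le_ofReal hp
  have := eLpNorm_add_le hf.aestronglyMeasurable hg.aestronglyMeasurable h1
  apply mul_le_mul_of_nonneg_left _ (Real.rpow_nonneg cpos.le _)
  rw [← ENNReal.toReal_add hf.eLpNorm_ne_top hg.eLpNorm_ne_top]
  exact ENNReal.toReal_mono (by
    exact ENNReal.add_ne_top.2 ⟨hf.eLpNorm_ne_top, hg.eLpNorm_ne_top⟩) this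

lemma pnorm_le_mul {p : ℝ} (hp : 0 < p) {f g : (Fin n → ℝ) → E} {c : ℝ} (hc : 0 ≤ c)
    (hg : MemLp g (ENNReal.ofReal p) (tmu n))
    (hdom : ∀ t, ‖f t‖ ≤ c * ‖g t‖) : pnorm n p f ≤ c * pnorm n p g := by
  have hgi : Integrable (fun t => ‖g t‖ ^ p) (tmu n) := by
    simpa [ENNReal.toReal_ofReal hp.le] using
      hg.integrable_norm_rpow (by simpa using hp) ENNReal.ofReal_ne_top
  have key : ∫ t, ‖f t‖ ^ p ∂(tmu n) ≤ c ^ p * ∫ t, ‖g t‖ ^ p ∂(tmu n) := by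
    have hsm : ∫ t, (c ^ p) * ‖g t‖ ^ p ∂(tmu n) = c ^ p * ∫ t, ‖g t‖ ^ p ∂(tmu n) := by
      simpa using integral_smul (c ^ p) (fun t => ‖g t‖ ^ p)
    rw [← hsm]
    apply integral_mono_of_nonneg
    · exact Filter.Eventually.of_forall fun t => Real.rpow_nonneg (norm_nonneg _) _
    · exact hgi.const_mul _
    · refine Filter.Eventually.of_forall fun t => ?_
      show ‖f t‖ ^ p ≤ c ^ p * ‖g t‖ ^ p
      rw [← Real.mul_rpow hc (norm_nonneg _)]
      exact Real.rpow_le_rpow (norm_nonneg _) (hdom t) hp.le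
  rw [pnorm_def, pnorm_def]
  calc (((2 * Real.pi) ^ n)⁻¹ * ∫ t, ‖f t‖ ^ p ∂(tmu n)) ^ (1/p)
      ≤ (((2 * Real.pi) ^ n)⁻¹ * (c ^ p * ∫ t, ‖g t‖ ^ p ∂(tmu n))) ^ (1/p) := by
        apply Real.rpow_le_rpow
          (mul_nonneg cpos.le (integral_nonneg fun t => Real.rpow_nonneg (norm_nonneg _) _))
          (mul_le_mul_of_nonneg_left key cpos.le) (by positivity)
    _ = c * (((2 * Real.pi) ^ n)⁻¹ * ∫ t, ‖g t‖ ^ p ∂(tmu n)) ^ (1/p) := by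
        have hI : 0 ≤ ∫ t, ‖g t‖ ^ p ∂(tmu n) :=
          integral_nonneg fun t => Real.rpow_nonneg (norm_nonneg _) _
        rw [mul_left_comm, Real.mul_rpow (by positivity) (mul_nonneg cpos.le hI)]
        congr 1
        rw [← Real.rpow_mul hc, mul_one_div_cancel hp.ne', Real.rpow_one]



set_option linter.unusedSectionVars false

instance (n : ℕ) : IsFiniteMeasure (tmu n) := by
  constructor
  rw [tmu, Measure.restrict_apply_univ]
  rw [Real.volume_Icc_pi]
  exact ENNReal.prod_lt_top (fun i _ => ENNReal.ofReal_lt_top)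

lemma norm_ek (k : Fin n → ℤ) (t : Fin n → ℝ) : ‖ek n k t‖ = 1 := by
  have : (Complex.I * ∑ i, (k i : ℂ) * (t i : ℂ)) = ((∑ i, (k i : ℝ) * t i : ℝ) : ℂ) * Complex.I := by
    push_cast; ring
  rw [ek, this, Complex.norm_exp_ofReal_mul_I]

lemma continuous_ek (k : Fin n → ℤ) : Continuous (ek n k) := by
  unfold ek; fun_prop

/-- trig polynomial -/
noncomputable def trig (n : ℕ) (A : Finset (Fin n → ℤ)) (v : (Fin n → ℤ) → E) :
    (Fin n → ℝ) → E := fun t => ∑ k ∈ A, ek n k t • v k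

lemma continuous_trig (A : Finset (Fin n → ℤ)) (v : (Fin n → ℤ) → E) :
    Continuous (trig n A v) := by
  unfold trig
  exact continuous_finset_sum _ fun k _ => (continuous_ek k).smul continuous_const

lemma memℒp_trig (p : ℝ≥0∞) (A : Finset (Fin n → ℤ)) (v : (Fin n → ℤ) → E) :
    MemLp (trig n A v) p (tmu n) := by
  refine MemLp.mono_exponent (q := ∞) ?_ le_top
  refine memLp_top_of_bound ((continuous_trig A v).aestronglyMeasurable) (∑ k ∈ A, ‖v k‖) ?_
  filter_upwards with t
  calc ‖trig n A v t‖ ≤ ∑ k ∈ A, ‖ek n k t • v k‖ := norm_sum_le _ _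
  _ = ∑ k ∈ A, ‖v k‖ := by
      refine Finset.sum_congr rfl fun k _ => ?_
      rw [norm_smul, norm_ek, one_mul]


lemma ek_add (k m : Fin n → ℤ) (t : Fin n → ℝ) : ek n (k + m) t = ek n m t * ek n k t := by
  rw [ek, ek, ek, ← Complex.exp_add]
  congr 1
  rw [← mul_add, ← Finset.sum_add_distrib]
  congr 1
  refine Finset.sum_congr rfl fun i _ => ?_
  push_cast [Pi.add_apply]
  ring

lemma pnorm_modulation (p : ℝ) (m : Fin n → ℤ) (A : Finset (Fin n → ℤ))
    (v : (Fin n → ℤ) → E) :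
    pnorm n p (fun t => ∑ k ∈ A, ek n (k + m) t • v k) = pnorm n p (trig n A v) := by
  apply pnorm_congr
  intro t
  have : ∑ k ∈ A, ek n (k + m) t • v k = ek n m t • trig n A v t := by
    rw [trig, Finset.smul_sum]
    refine Finset.sum_congr rfl fun k _ => ?_
    rw [ek_add, mul_smul]
  rw [this, norm_smul, norm_ek, one_mul]

lemma pnorm_sum_le {ι : Type*} {p : ℝ} (hp : 1 ≤ p) (T : Finset ι)
    (F : ι → (Fin n → ℝ) → E) (hF : ∀ i ∈ T, MemLp (F i) (ENNReal.ofReal p) (tmu n)) :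
    pnorm n p (fun t => ∑ i ∈ T, F i t) ≤ ∑ i ∈ T, pnorm n p (F i) := by
  have hp0 : (0:ℝ) < p := lt_of_lt_of_le one_pos hp
  induction T using Finset.cons_induction with
  | empty => simp [pnorm_zero hp0]
  | cons i T hi ih =>
    simp only [Finset.sum_cons]
    calc pnorm n p (fun t => F i t + ∑ j ∈ T, F j t)
        ≤ pnorm n p (F i) + pnorm n p (fun t => ∑ j ∈ T, F j t) := by
          apply pnorm_add_le hp (hF i (Finset.mem_cons_self i T))
          have h2 : (fun t => ∑ j ∈ T, F j t) = ∑ j ∈ T, F j := by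
            funext t; simp
          rw [h2]
          exact memLp_finsetSum' T (fun j hj => hF j (Finset.mem_cons_of_mem hj))
      _ ≤ pnorm n p (F i) + ∑ j ∈ T, pnorm n p (F j) := by
          exact add_le_add_right (ih fun j hj => hF j (Finset.mem_cons_of_mem hj)) _

lemma trig_opapply (A : Finset (Fin n → ℤ)) (v : (Fin n → ℤ) → E) (D : E →L[ℂ] E)
    (t : Fin n → ℝ) : trig n A (fun k => D (v k)) t = D (trig n A v t) := by
  rw [trig, trig, map_sum]
  exact Finset.sum_congr rfl fun k _ => (D.map_smul _ _).symm

lemma pnorm_opapply {p : ℝ} (hp : 0 < p) (A : Finset (Fin n → ℤ)) (v : (Fin n → ℤ) → E)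
    (D : E →L[ℂ] E) :
    pnorm n p (trig n A (fun k => D (v k))) ≤ ‖D‖ * pnorm n p (trig n A v) := by
  apply pnorm_le_mul hp (norm_nonneg D) (memℒp_trig _ _ _)
  intro t
  rw [trig_opapply]
  exact D.le_opNorm _

end S13
namespace S13

lemma mult_halfspace {p C : ℝ} (hC : IsMult n p (Riesz n E) C) (i : Fin n) (a : ℤ)
    (A : Finset (Fin n → ℤ)) (v : (Fin n → ℤ) → E) :
    pnorm n p (trig n A fun k => if a ≤ k i then v k else 0) ≤ C * pnorm n p (trig n A v) := by
  classical
  set x : (Fin n → ℤ) → E := fun k => if k ∈ A then v k else 0 with hxdef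
  set N : ℤ := ((A.sup fun k => Finset.univ.sup fun j => (-(k j)).toNat : ℕ) : ℤ) with hNdef
  have hN : ∀ k ∈ A, ∀ j : Fin n, j ≠ i → 0 ≤ k j + N := by
    intro k hk j _
    have h1 : (-(k j)).toNat ≤ A.sup fun k => Finset.univ.sup fun j => (-(k j)).toNat := by
      calc (-(k j)).toNat ≤ Finset.univ.sup fun j => (-(k j)).toNat :=
            Finset.le_sup (f := fun j => (-(k j)).toNat) (Finset.mem_univ j)
        _ ≤ _ := Finset.le_sup (f := fun k => Finset.univ.sup fun j => (-(k j)).toNat) hk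
    have h2 : -(k j) ≤ N := by
      rw [hNdef]
      exact le_trans (Int.self_le_toNat _) (by exact_mod_cast h1)
    linarith
  set m : Fin n → ℤ := fun j => if j = i then -a else N with hmdef
  set w : (Fin n → ℤ) → E := fun k => x (k - m) with hwdef
  have hmem : ∀ k, k ∈ A.image (· + m) ↔ k - m ∈ A := by
    intro k
    simp only [Finset.mem_image]
    constructor
    · rintro ⟨b, hb, rfl⟩; simpa using hb
    · intro h; exact ⟨k - m, h, by ring⟩

  have hwsupp : (Function.support w).Finite := by
    apply Set.Finite.subset (A.image (· + m)).finite_toSet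
    intro k hk
    have : k - m ∈ A := by
      by_contra h'
      exact hk (by simp [hwdef, hxdef, h'])
    rw [Finset.mem_coe]
    exact (hmem k).2 this
  have key := hC w hwsupp
  set u : (Fin n → ℤ) → E := fun k => Riesz n E (k + m) (x k) with hudef
  -- identify the finsum functions with modulated finite sums
  have himg : ∀ (G : (Fin n → ℤ) → E), (∀ k, k - m ∈ A → False → True) → True := fun _ _ => trivial
  have e2 : (fun t => ∑ᶠ k, ek n k t • w k) =
      fun t => ∑ k ∈ A, ek n (k + m) t • x k := by
    funext t
    rw [finsum_eq_finset_sum_of_support_subset _ (s := A.image (· + m)) (by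
      intro k hk
      rw [Function.mem_support] at hk
      by_contra h'
      rw [Finset.mem_coe] at h'
      have : w k = 0 := by simp [hwdef, hxdef, (hmem k).not.1 h']
      exact hk (by rw [this, smul_zero]))]
    rw [Finset.sum_image (by intro a _ b _ h; simpa using h)]
    refine Finset.sum_congr rfl fun k hk => ?_
    simp [hwdef]
  have e1 : (fun t => ∑ᶠ k, ek n k t • Riesz n E k (w k)) =
      fun t => ∑ k ∈ A, ek n (k + m) t • u k := by
    funext t
    rw [finsum_eq_finset_sum_of_support_subset _ (s := A.image (· + m)) (by
      intro k hk
      rw [Function.mem_support] at hk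
      by_contra h'
      rw [Finset.mem_coe] at h'
      have : w k = 0 := by simp [hwdef, hxdef, (hmem k).not.1 h']
      exact hk (by rw [this, map_zero, smul_zero]))]
    rw [Finset.sum_image (by intro a _ b _ h; simpa using h)]
    refine Finset.sum_congr rfl fun k hk => ?_
    simp [hudef, hwdef]
  rw [e1, e2, pnorm_modulation, pnorm_modulation] at key
  have hxv : trig n A x = trig n A v := by
    funext t
    exact Finset.sum_congr rfl fun k hk => by simp [hxdef, hk]
  have huP : trig n A u = trig n A (fun k => if a ≤ k i then v k else 0) := by
    funext t
    refine Finset.sum_congr rfl fun k hk => ?_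
    have hiff : (∀ j, 0 ≤ (k + m) j) ↔ a ≤ k i := by
      constructor
      · intro h
        have := h i
        simp [hmdef] at this
        linarith
      · intro h j
        by_cases hj : j = i
        · subst hj; simp [hmdef]; linarith
        · simp [hmdef, hj]
          have := hN k hk j hj
          linarith
    by_cases hcase : a ≤ k i
    · simp only [hudef, Riesz]
      rw [if_pos (hiff.2 hcase), if_pos hcase]
      simp [hxdef, hk]
    · simp only [hudef, Riesz]
      rw [if_neg (fun h => hcase (hiff.1 h)), if_neg hcase]
      simp
  rw [huP, hxv] at key
  exact key

lemma trig_sub (A : Finset (Fin n → ℤ)) (F G : (Fin n → ℤ) → E) (t : Fin n → ℝ) :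
    trig n A (fun k => F k - G k) t = trig n A F t - trig n A G t := by
  rw [trig, trig, trig, ← Finset.sum_sub_distrib]
  exact Finset.sum_congr rfl fun k _ => smul_sub _ _ _

lemma pnorm_sub_le {p : ℝ} (hp : 1 ≤ p) {f g : (Fin n → ℝ) → E}
    (hf : MemLp f (ENNReal.ofReal p) (tmu n)) (hg : MemLp g (ENNReal.ofReal p) (tmu n)) :
    pnorm n p (fun t => f t - g t) ≤ pnorm n p f + pnorm n p g := by
  have h1 : pnorm n p (fun t => f t - g t) = pnorm n p (fun t => f t + (-g) t) := by
    apply pnorm_congr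
    intro t
    simp [sub_eq_add_neg]
  rw [h1]
  refine le_trans (pnorm_add_le hp hf hg.neg) ?_
  have : pnorm n p (-g) = pnorm n p g := pnorm_congr p fun t => by simp
  rw [this]

lemma mult_interval {p C : ℝ} (hp : 1 ≤ p) (hC : IsMult n p (Riesz n E) C) (hC0 : 0 ≤ C)
    (i : Fin n) (a b : ℤ) (A : Finset (Fin n → ℤ)) (v : (Fin n → ℤ) → E) :
    pnorm n p (trig n A fun k => if a ≤ k i ∧ k i ≤ b then v k else 0) ≤
      2 * C * pnorm n p (trig n A v) := by
  have hp0 : (0:ℝ) < p := lt_of_lt_of_le one_pos hp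
  by_cases hab : a ≤ b
  · have hsplit : (fun k => if a ≤ k i ∧ k i ≤ b then v k else 0) =
        fun k => (if a ≤ k i then v k else 0) - (if b + 1 ≤ k i then v k else 0) := by
      funext k
      by_cases h1 : a ≤ k i
      · by_cases h2 : k i ≤ b
        · rw [if_pos ⟨h1, h2⟩, if_pos h1, if_neg (by omega), sub_zero]
        · rw [if_neg (fun h => h2 h.2), if_pos h1, if_pos (by omega), sub_self]
      · rw [if_neg (fun h => h1 h.1), if_neg h1, if_neg (by omega), sub_self]
    rw [hsplit]
    have heq : trig n A (fun k => (if a ≤ k i then v k else 0) - (if b + 1 ≤ k i then v k else 0))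
        = fun t => trig n A (fun k => if a ≤ k i then v k else 0) t -
            trig n A (fun k => if b + 1 ≤ k i then v k else 0) t := by
      funext t; exact trig_sub A _ _ t
    rw [heq]
    calc pnorm n p _ ≤ pnorm n p (trig n A (fun k => if a ≤ k i then v k else 0)) +
          pnorm n p (trig n A (fun k => if b + 1 ≤ k i then v k else 0)) :=
        pnorm_sub_le hp (memℒp_trig _ _ _) (memℒp_trig _ _ _)
      _ ≤ C * pnorm n p (trig n A v) + C * pnorm n p (trig n A v) :=
        add_le_add (mult_halfspace hC i a A v) (mult_halfspace hC i (b+1) A v)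
      _ = 2 * C * pnorm n p (trig n A v) := by ring
  · have : (fun k => if a ≤ k i ∧ k i ≤ b then v k else 0) = fun _ => (0:E) := by
      funext k
      rw [if_neg (fun h => hab (le_trans h.1 h.2))]
    rw [this]
    have : trig n A (fun _ => (0:E)) = fun _ => (0:E) := by
      funext t; simp [trig]
    rw [this, pnorm_zero hp0]
    exact mul_nonneg (by positivity) (pnorm_nonneg _ _)

lemma mult_box_aux {p C : ℝ} (hp : 1 ≤ p) (hC : IsMult n p (Riesz n E) C) (hC0 : 0 ≤ C)
    (α β : Fin n → ℤ) (L : List (Fin n)) (A : Finset (Fin n → ℤ)) (v : (Fin n → ℤ) → E) :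
    pnorm n p (trig n A fun k => if ∀ j ∈ L, α j ≤ k j ∧ k j ≤ β j then v k else 0) ≤
      (2 * C) ^ L.length * pnorm n p (trig n A v) := by
  classical
  induction L generalizing v with
  | nil =>
    simp only [List.not_mem_nil, false_implies, implies_true, if_true, List.length_nil, pow_zero,
      one_mul]
    exact le_refl _
  | cons j L' ih =>
    have hcomb : (fun k => if ∀ j' ∈ j :: L', α j' ≤ k j' ∧ k j' ≤ β j' then v k else 0) =
        fun k => if α j ≤ k j ∧ k j ≤ β j then
          (fun k' => if ∀ j' ∈ L', α j' ≤ k' j' ∧ k' j' ≤ β j' then v k' else 0) k else 0 := by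
      funext k
      simp only [List.forall_mem_cons]
      by_cases h1 : α j ≤ k j ∧ k j ≤ β j
      · by_cases h2 : ∀ j' ∈ L', α j' ≤ k j' ∧ k j' ≤ β j'
        · rw [if_pos ⟨h1, h2⟩, if_pos h1, if_pos h2]
        · rw [if_neg (fun h => h2 h.2), if_pos h1, if_neg h2]
      · rw [if_neg (fun h => h1 h.1), if_neg h1]
    rw [hcomb]
    calc pnorm n p _ ≤ 2 * C * pnorm n p
          (trig n A fun k => if ∀ j' ∈ L', α j' ≤ k j' ∧ k j' ≤ β j' then v k else 0) :=
        mult_interval hp hC hC0 j (α j) (β j) A _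
      _ ≤ 2 * C * ((2 * C) ^ L'.length * pnorm n p (trig n A v)) := by
        apply mul_le_mul_of_nonneg_left (ih v) (by positivity)
      _ = (2 * C) ^ (j :: L').length * pnorm n p (trig n A v) := by
        rw [List.length_cons, pow_succ]
        ring

lemma mult_box {p C : ℝ} (hp : 1 ≤ p) (hC : IsMult n p (Riesz n E) C) (hC0 : 0 ≤ C)
    (α β : Fin n → ℤ) (A : Finset (Fin n → ℤ)) (v : (Fin n → ℤ) → E) :
    pnorm n p (trig n A fun k => if k ∈ Finset.Icc α β then v k else 0) ≤
      (2 * C) ^ n * pnorm n p (trig n A v) := by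
  classical
  have hcond : (fun k => if k ∈ Finset.Icc α β then v k else 0) =
      fun k => if ∀ j ∈ List.finRange n, α j ≤ k j ∧ k j ≤ β j then v k else 0 := by
    funext k
    congr 1
    · simp only [Finset.mem_Icc, eq_iff_iff]
      constructor
      · intro h j _; exact ⟨h.1 j, h.2 j⟩
      · intro h
        exact ⟨fun j => (h j (List.mem_finRange j)).1, fun j => (h j (List.mem_finRange j)).2⟩
  rw [hcond]
  have := mult_box_aux hp hC hC0 α β (List.finRange n) A v
  rwa [List.length_finRange] at this

end S13
section Abel
namespace S13

variable {V : Type*} [AddCommGroup V] {n : ℕ}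

lemma dOp_comm (α : Fin n → ℤ) (i j : Fin n) (F : (Fin n → ℤ) → V) :
    dOp α i (dOp α j F) = dOp α j (dOp α i F) := by
  by_cases hij : i = j
  · subst hij; rfl
  funext x
  have hcom : x - Pi.single j 1 - Pi.single i 1 = x - Pi.single i 1 - Pi.single j 1 := by
    abel
  simp only [dOp, Pi.sub_apply, Pi.single_eq_of_ne hij, Pi.single_eq_of_ne (Ne.symm hij),
    sub_zero]
  by_cases hi : x i = α i <;> by_cases hj : x j = α j <;>
    simp [hi, hj, hcom] <;> abel

lemma telescope_int (g : ℤ → V) (a : ℤ) : ∀ b : ℤ, a ≤ b →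
    ∑ m ∈ Finset.Ioc a b, (g m - g (m - 1)) = g b - g a := by
  refine Int.le_induction ?_ ?_
  · simp
  · intro b hb ih
    have hins : Finset.Ioc a (b + 1) = insert (b + 1) (Finset.Ioc a b) := by
      ext m
      simp only [Finset.mem_Ioc, Finset.mem_insert]
      omega
    rw [hins, Finset.sum_insert (by simp), ih]
    simp only [add_sub_cancel_right]
    abel

/-- ξ ranges over the part of the box `[α,k]` where coordinates outside `L` are pinned to `k`. -/
noncomputable def boxL {n : ℕ} (L : List (Fin n)) (α k : Fin n → ℤ) : Finset (Fin n → ℤ) :=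
  (Finset.Icc α k).filter (fun ξ => ∀ j, j ∉ L → ξ j = k j)

lemma abel_aux (α : Fin n → ℤ) :
    ∀ (L : List (Fin n)), L.Nodup → ∀ (F : (Fin n → ℤ) → V) (k : Fin n → ℤ), α ≤ k →
    ∑ ξ ∈ boxL L α k, (List.foldr (dOp α) F (L.filter fun j => decide (ξ j ≠ α j))) ξ = F k := by
  intro L
  induction L with
  | nil =>
    intro _ F k hk
    have hbox : boxL [] α k = {k} := by
      ext ξ
      simp only [boxL, Finset.mem_filter, Finset.mem_Icc, Finset.mem_singleton,
        List.not_mem_nil, not_false_iff, true_implies]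
      constructor
      · rintro ⟨_, h2⟩; exact funext h2
      · rintro rfl; exact ⟨⟨hk, le_refl _⟩, fun j => rfl⟩
    rw [hbox, Finset.sum_singleton, List.filter_nil, List.foldr_nil]
  | cons j L' ih =>
    intro hnd F k hk
    have hjL' : j ∉ L' := (List.nodup_cons.1 hnd).1
    have hnd' : L'.Nodup := (List.nodup_cons.1 hnd).2
    classical
    have hbi : boxL (j :: L') α k =
        (Finset.Icc (α j) (k j)).biUnion (fun m => boxL L' α (Function.update k j m)) := by
      ext ξ
      simp only [boxL, Finset.mem_biUnion, Finset.mem_filter, Finset.mem_Icc]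
      constructor
      · rintro ⟨⟨h1, h2⟩, h3⟩
        refine ⟨ξ j, ⟨h1 j, h2 j⟩, ⟨⟨h1, fun i => ?_⟩, fun i hi => ?_⟩⟩
        · by_cases hij : i = j
          · subst hij; simp
          · rw [Function.update_of_ne hij]; exact h2 i
        · by_cases hij : i = j
          · subst hij; simp
          · rw [Function.update_of_ne hij]
            exact h3 i (by simp [hij, hi])
      · rintro ⟨m, ⟨hm1, hm2⟩, ⟨⟨h1, h2⟩, h3⟩⟩
        have hξj : ξ j = m := by
          have := h3 j hjL'
          simpa using this
        refine ⟨⟨h1, fun i => ?_⟩, fun i hi => ?_⟩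
        · by_cases hij : i = j
          · subst hij; rw [hξj]; exact hm2
          · have := h2 i; rwa [Function.update_of_ne hij] at this
        · have hij : i ≠ j := fun h => hi (by simp [h])
          have hiL' : i ∉ L' := fun h => hi (List.mem_cons_of_mem j h)
          have := h3 i hiL'
          rwa [Function.update_of_ne hij] at this
    have hdisj : (↑(Finset.Icc (α j) (k j)) : Set ℤ).PairwiseDisjoint
        (fun m => boxL L' α (Function.update k j m)) := by
      intro m1 _ m2 _ hne
      apply Finset.disjoint_left.2
      intro ξ h1 h2
      simp only [boxL, Finset.mem_filter] at h1 h2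
      have e1 := h1.2 j hjL'
      have e2 := h2.2 j hjL'
      simp only [Function.update_self] at e1 e2
      exact hne (e1 ▸ e2)
    rw [hbi, Finset.sum_biUnion hdisj]
    have hξj_mem : ∀ m, ∀ ξ ∈ boxL L' α (Function.update k j m), ξ j = m := by
      intro m ξ hξ
      simp only [boxL, Finset.mem_filter] at hξ
      have := hξ.2 j hjL'
      simpa using this
    have hαle : ∀ m, α j ≤ m → α ≤ Function.update k j m := by
      intro m hm i
      by_cases hij : i = j
      · subst hij; simpa using hm
      · rw [Function.update_of_ne hij]; exact hk i
    rw [Finset.Icc_eq_cons_Ioc (hk j), Finset.sum_cons]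
    -- the m = α j term
    have hterm0 : ∑ ξ ∈ boxL L' α (Function.update k j (α j)),
        (List.foldr (dOp α) F ((j :: L').filter fun i => decide (ξ i ≠ α i))) ξ
        = F (Function.update k j (α j)) := by
      rw [← ih hnd' F (Function.update k j (α j)) (hαle _ (le_refl _))]
      refine Finset.sum_congr rfl fun ξ hξ => ?_
      have hj : ξ j = α j := hξj_mem _ ξ hξ
      have : ((j :: L').filter fun i => decide (ξ i ≠ α i)) =
          (L'.filter fun i => decide (ξ i ≠ α i)) := by
        rw [List.filter_cons]
        simp [hj]
      rw [this]
    rw [hterm0]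
    -- the m > α j terms
    have hterm : ∀ m ∈ Finset.Ioc (α j) (k j),
        ∑ ξ ∈ boxL L' α (Function.update k j m),
          (List.foldr (dOp α) F ((j :: L').filter fun i => decide (ξ i ≠ α i))) ξ
        = F (Function.update k j m) - F (Function.update k j (m - 1)) := by
      intro m hm
      rw [Finset.mem_Ioc] at hm
      have key : ∑ ξ ∈ boxL L' α (Function.update k j m),
          (List.foldr (dOp α) (dOp α j F) (L'.filter fun i => decide (ξ i ≠ α i))) ξ
          = (dOp α j F) (Function.update k j m) :=
        ih hnd' (dOp α j F) (Function.update k j m) (hαle _ hm.1.le)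
      have step : ∀ ξ ∈ boxL L' α (Function.update k j m),
          (List.foldr (dOp α) F ((j :: L').filter fun i => decide (ξ i ≠ α i))) ξ
          = (List.foldr (dOp α) (dOp α j F) (L'.filter fun i => decide (ξ i ≠ α i))) ξ := by
        intro ξ hξ
        have hj : ξ j = m := hξj_mem _ ξ hξ
        have hcons : ((j :: L').filter fun i => decide (ξ i ≠ α i)) =
            j :: (L'.filter fun i => decide (ξ i ≠ α i)) := by
          rw [List.filter_cons]
          have hd : decide (ξ j ≠ α j) = true := by
            simp only [hj, decide_eq_true_eq]
            omega
          simp [hd]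
        rw [hcons]
        haveI : LeftCommutative (dOp (V := V) α) := ⟨fun a b c => dOp_comm α a b c⟩
        have hperm := (List.perm_append_singleton j (L'.filter fun i => decide (ξ i ≠ α i))).symm
        rw [List.Perm.foldr_eq hperm F, List.foldr_append]
        rfl
      rw [Finset.sum_congr rfl step, key, dOp]
      rw [if_neg (by simp; omega)]
      congr 2
      funext i
      by_cases hij : i = j
      · subst hij; simp
      · simp [Function.update_of_ne hij, Pi.single_eq_of_ne hij]
    rw [Finset.sum_congr rfl hterm, telescope_int (fun m => F (Function.update k j m)) _ _ (hk j)]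
    rw [Function.update_eq_self]
    abel

/-- Summation by parts on a box. -/
lemma abel_sum (α β : Fin n → ℤ) (M : (Fin n → ℤ) → V) (k : Fin n → ℤ)
    (hk : k ∈ Finset.Icc α β) :
    M k = ∑ ξ ∈ Finset.Icc α k,
      dGamma α (fun j => decide (ξ j ≠ α j)) (restrictBox α β M) ξ := by
  rw [Finset.mem_Icc] at hk
  have h1 := abel_aux α (List.finRange n) (List.nodup_finRange n) (restrictBox α β M) k hk.1
  have hbox : boxL (List.finRange n) α k = Finset.Icc α k := by
    rw [boxL, Finset.filter_true_of_mem]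
    intro ξ _ j hj
    exact absurd (List.mem_finRange j) hj
  rw [hbox] at h1
  have h2 : restrictBox α β M k = M k := by
    rw [restrictBox, if_pos (Finset.mem_Icc.2 hk)]
  rw [← h2, ← h1]
  rfl

end S13
end Abel
namespace S13

variable {n : ℕ}

/-- sup of the absolute values of the coordinates -/
def mAbs (k : Fin n → ℤ) : ℕ := Finset.univ.sup fun i => (k i).natAbs

def rIdx (k : Fin n → ℤ) : ℕ := Nat.log 2 (mAbs k)

def lSet (k : Fin n → ℤ) : Finset (Fin n) :=
  Finset.univ.filter fun i => 2 ^ rIdx k ≤ (k i).natAbs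

noncomputable def lIdx (hn : 0 < n) (k : Fin n → ℤ) : Fin n :=
  if h : (lSet k).Nonempty then (lSet k).max' h else ⟨0, hn⟩

noncomputable def dIdx (hn : 0 < n) (k : Fin n → ℤ) : ℕ := n * rIdx k + (lIdx hn k : ℕ) + 1

lemma mAbs_le (k : Fin n → ℤ) (i : Fin n) : (k i).natAbs ≤ mAbs k :=
  Finset.le_sup (f := fun i => (k i).natAbs) (Finset.mem_univ i)

lemma mAbs_pos {k : Fin n → ℤ} (hk : k ≠ 0) : 1 ≤ mAbs k := by
  have : ∃ i, k i ≠ 0 := by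
    by_contra h
    push_neg at h
    exact hk (funext h)
  obtain ⟨i, hi⟩ := this
  calc 1 ≤ (k i).natAbs := Int.natAbs_pos.2 hi
    _ ≤ mAbs k := mAbs_le k i

lemma pow_rIdx_le {k : Fin n → ℤ} (hk : k ≠ 0) : 2 ^ rIdx k ≤ mAbs k :=
  Nat.pow_log_le_self 2 (by have := mAbs_pos hk; omega)

lemma mAbs_lt_pow (k : Fin n → ℤ) : mAbs k < 2 ^ (rIdx k + 1) :=
  Nat.lt_pow_succ_log_self (by norm_num) _

lemma lSet_nonempty (hn : 0 < n) {k : Fin n → ℤ} (hk : k ≠ 0) : (lSet k).Nonempty := by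
  haveI : Nonempty (Fin n) := ⟨⟨0, hn⟩⟩
  obtain ⟨i, _, hi⟩ := Finset.exists_mem_eq_sup Finset.univ Finset.univ_nonempty
    (fun i => (k i).natAbs)
  refine ⟨i, ?_⟩
  simp only [lSet, Finset.mem_filter]
  refine ⟨Finset.mem_univ i, ?_⟩
  rw [← hi]
  exact pow_rIdx_le hk

lemma lIdx_mem (hn : 0 < n) {k : Fin n → ℤ} (hk : k ≠ 0) :
    2 ^ rIdx k ≤ (k (lIdx hn k)).natAbs := by
  have h := lSet_nonempty hn hk
  rw [lIdx, dif_pos h]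
  have := (lSet k).max'_mem h
  simp only [lSet, Finset.mem_filter] at this
  exact this.2

lemma lIdx_max (hn : 0 < n) {k : Fin n → ℤ} (hk : k ≠ 0) (i : Fin n)
    (hi : (lIdx hn k) < i) : (k i).natAbs < 2 ^ rIdx k := by
  have h := lSet_nonempty hn hk
  rw [lIdx, dif_pos h] at hi
  by_contra hcon
  push_neg at hcon
  have : i ∈ lSet k := by
    simp only [lSet, Finset.mem_filter]; exact ⟨Finset.mem_univ i, hcon⟩
  exact absurd (Finset.le_max' _ i this) (not_le.2 hi)

lemma dIdx_arith (hn : 0 < n) (k : Fin n → ℤ) :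
    (dIdx hn k - 1) / n = rIdx k ∧ (dIdx hn k - 1) % n = (lIdx hn k : ℕ) := by
  have hl : (lIdx hn k : ℕ) < n := (lIdx hn k).2
  rw [dIdx]
  constructor
  · rw [Nat.add_sub_cancel, Nat.mul_add_div hn, Nat.div_eq_of_lt hl, Nat.add_zero]
  · rw [Nat.add_sub_cancel, Nat.mul_add_mod, Nat.mod_eq_of_lt hl]

/-- membership of a nonzero k in its box -/
lemma dIdx_mem (hn : 0 < n) {k : Fin n → ℤ} (hk : k ≠ 0) :
    (0 < k (lIdx hn k) ∧
      k ∈ Finset.Icc (boxPlusLo n (dIdx hn k)) (boxPlusHi n (dIdx hn k))) ∨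
    (k (lIdx hn k) < 0 ∧
      k ∈ Finset.Icc (boxMinusLo n (dIdx hn k)) (boxMinusHi n (dIdx hn k))) := by
  obtain ⟨hdiv, hmod⟩ := dIdx_arith hn k
  set r := rIdx k
  set l := lIdx hn k
  have habs_le : ∀ i, ((k i).natAbs : ℤ) ≤ 2 ^ (r+1) - 1 := by
    intro i
    have h1 : (k i).natAbs < 2 ^ (r+1) := lt_of_le_of_lt (mAbs_le k i) (mAbs_lt_pow k)
    have h2 : ((k i).natAbs : ℤ) < (2 : ℤ) ^ (r+1) := by exact_mod_cast h1
    omega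
  have habs : ∀ i, -(2^(r+1)) + 1 ≤ k i ∧ k i ≤ 2^(r+1) - 1 := by
    intro i
    have h := habs_le i
    rw [← Int.abs_eq_natAbs] at h
    have := abs_le.1 h
    omega
  have hsm : ∀ i : Fin n, (l : ℕ) < (i : ℕ) → -(2^r) + 1 ≤ k i ∧ k i ≤ 2^r - 1 := by
    intro i hi
    have h1 := lIdx_max hn hk i (by rwa [Fin.lt_def])
    have h2 : ((k i).natAbs : ℤ) < (2:ℤ) ^ r := by exact_mod_cast h1
    rw [← Int.abs_eq_natAbs] at h2
    have := abs_lt.1 h2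
    omega
  have hl2 : (2:ℤ)^r ≤ |k l| := by
    rw [Int.abs_eq_natAbs]
    exact_mod_cast lIdx_mem hn hk
  have hrpos : (1:ℤ) ≤ 2^r := one_le_pow₀ (by norm_num)
  by_cases hpos : 0 < k l
  · left
    refine ⟨hpos, ?_⟩
    rw [Finset.mem_Icc]
    constructor
    · intro i
      simp only [boxPlusLo, hdiv, hmod]
      rcases lt_trichotomy (i : ℕ) (l : ℕ) with h | h | h
      · rw [if_pos h]
        exact (habs i).1
      · rw [if_neg (by omega), if_pos h]
        have : i = l := Fin.ext h
        subst this
        rw [abs_of_pos hpos] at hl2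
        exact hl2
      · rw [if_neg (by omega), if_neg (by omega)]
        exact (hsm i h).1
    · intro i
      simp only [boxPlusHi, hdiv, hmod]
      rcases le_or_gt (i : ℕ) (l : ℕ) with h | h
      · rw [if_pos h]
        exact (habs i).2
      · rw [if_neg (by omega)]
        exact (hsm i h).2
  · right
    have hneg : k l < 0 := by
      rcases lt_trichotomy (k l) 0 with h | h | h
      · exact h
      · exfalso; rw [h] at hl2; simp at hl2; omega
      · exact absurd h hpos
    refine ⟨hneg, ?_⟩
    have hlneg : k l ≤ -(2^r) := by
      rw [abs_of_neg hneg] at hl2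
      omega
    rw [Finset.mem_Icc]
    constructor
    · intro i
      simp only [boxMinusLo, hdiv, hmod]
      rcases le_or_gt (i : ℕ) (l : ℕ) with h | h
      · rw [if_pos h]
        exact (habs i).1
      · rw [if_neg (by omega)]
        exact (hsm i h).1
    · intro i
      simp only [boxMinusHi, hdiv, hmod]
      rcases lt_trichotomy (i : ℕ) (l : ℕ) with h | h | h
      · rw [if_pos h]
        exact (habs i).2
      · rw [if_neg (by omega), if_pos h]
        have : i = l := Fin.ext h
        subst this
        exact hlneg
      · rw [if_neg (by omega), if_neg (by omega)]
        exact (hsm i h).2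


lemma natAbs_le_of {a : ℤ} {c : ℕ} (h : |a| ≤ (c:ℤ)) : a.natAbs ≤ c := by
  rwa [Int.abs_eq_natAbs, Nat.cast_le] at h

lemma cast_pow_sub_one (r : ℕ) : ((2^r - 1 : ℕ) : ℤ) = 2^r - 1 := by
  have h : (1:ℕ) ≤ 2^r := (by positivity : 0 < 2^r)
  rw [Nat.cast_sub h]
  push_cast
  ring

lemma dIdx_eq_of_bounds (hn : 0 < n) {k : Fin n → ℤ} {r l0 : ℕ} (hl0 : l0 < n)
    (hbig : 2^r ≤ (k ⟨l0, hl0⟩).natAbs)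
    (hall : ∀ i, (k i).natAbs ≤ 2^(r+1) - 1)
    (hsmall : ∀ i : Fin n, l0 < (i:ℕ) → (k i).natAbs ≤ 2^r - 1) :
    k ≠ 0 ∧ lIdx hn k = ⟨l0, hl0⟩ ∧ dIdx hn k = n * r + l0 + 1 := by
  have hrpos : (0:ℕ) < 2^r := by positivity
  have hk0 : k ≠ 0 := by
    intro h
    rw [h] at hbig
    simp only [Pi.zero_apply, Int.natAbs_zero] at hbig
    omega
  have hm1 : 2^r ≤ mAbs k := le_trans hbig (mAbs_le k _)
  have hm2 : mAbs k < 2^(r+1) := by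
    have : mAbs k ≤ 2^(r+1) - 1 := Finset.sup_le fun i _ => hall i
    have h1 : (0:ℕ) < 2^(r+1) := by positivity
    omega
  have hr : rIdx k = r := Nat.log_eq_of_pow_le_of_lt_pow hm1 hm2
  have hne := lSet_nonempty hn hk0
  have hlf_mem : (⟨l0, hl0⟩ : Fin n) ∈ lSet k := by
    simp only [lSet, Finset.mem_filter, hr]
    exact ⟨Finset.mem_univ _, hbig⟩
  have hlidx : lIdx hn k = ⟨l0, hl0⟩ := by
    rw [lIdx, dif_pos hne]
    apply le_antisymm
    · apply Finset.max'_le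
      intro i hi
      simp only [lSet, Finset.mem_filter, hr] at hi
      rw [Fin.le_def]
      by_contra hcon
      push_neg at hcon
      have := hsmall i (by simpa using hcon)
      omega
    · exact Finset.le_max' _ _ hlf_mem
  refine ⟨hk0, hlidx, ?_⟩
  rw [dIdx, hr, hlidx]

lemma mem_plus_uniq (hn : 0 < n) {k : Fin n → ℤ} {d : ℕ} (hd : 0 < d)
    (hk : k ∈ Finset.Icc (boxPlusLo n d) (boxPlusHi n d)) :
    k ≠ 0 ∧ dIdx hn k = d ∧ 0 < k (lIdx hn k) := by
  set r := (d - 1) / n with hr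
  set l0 := (d - 1) % n with hl0
  have hl0n : l0 < n := Nat.mod_lt _ hn
  rw [Finset.mem_Icc] at hk
  obtain ⟨hlo, hhi⟩ := hk
  have hp2 : (2:ℤ)^(r+1) = 2 * 2^r := by ring
  have hrp : (1:ℤ) ≤ 2^r := one_le_pow₀ (by norm_num)
  have hposl : (2:ℤ)^r ≤ k ⟨l0, hl0n⟩ := by
    have := hlo ⟨l0, hl0n⟩
    simpa only [boxPlusLo, ← hr, ← hl0, lt_irrefl, if_neg (lt_irrefl l0), if_pos rfl, ↓reduceIte] using this
  have hbig : 2^r ≤ (k ⟨l0, hl0n⟩).natAbs := by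
    have : ((2^r : ℕ) : ℤ) ≤ |k ⟨l0, hl0n⟩| := by
      push_cast
      rw [abs_of_pos (by omega)]
      exact hposl
    rw [Int.abs_eq_natAbs, Nat.cast_le] at this
    exact this
  have hall : ∀ i, (k i).natAbs ≤ 2^(r+1) - 1 := by
    intro i
    apply natAbs_le_of
    rw [cast_pow_sub_one, abs_le]
    have h1 := hlo i
    have h2 := hhi i
    simp only [boxPlusLo, boxPlusHi] at h1 h2
    rw [← hr, ← hl0] at h1 h2
    rcases lt_trichotomy (i:ℕ) l0 with h | h | h
    · rw [if_pos h] at h1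
      rw [if_pos (le_of_lt h)] at h2
      constructor <;> omega
    · rw [if_neg (by omega), if_pos h] at h1
      rw [if_pos (le_of_eq h)] at h2
      constructor <;> omega
    · rw [if_neg (by omega), if_neg (by omega)] at h1
      rw [if_neg (by omega)] at h2
      constructor <;> omega
  have hsmall : ∀ i : Fin n, l0 < (i:ℕ) → (k i).natAbs ≤ 2^r - 1 := by
    intro i hi
    apply natAbs_le_of
    rw [cast_pow_sub_one, abs_le]
    have h1 := hlo i
    have h2 := hhi i
    simp only [boxPlusLo, boxPlusHi] at h1 h2
    rw [← hr, ← hl0] at h1 h2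
    rw [if_neg (by omega), if_neg (by omega)] at h1
    rw [if_neg (by omega)] at h2
    constructor <;> omega
  obtain ⟨hk0, hlidx, hdidx⟩ := dIdx_eq_of_bounds hn hl0n hbig hall hsmall
  refine ⟨hk0, ?_, ?_⟩
  · rw [hdidx, hr, hl0]
    have := Nat.div_add_mod (d - 1) n
    omega
  · rw [hlidx]
    omega

lemma mem_minus_uniq (hn : 0 < n) {k : Fin n → ℤ} {d : ℕ} (hd : 0 < d)
    (hk : k ∈ Finset.Icc (boxMinusLo n d) (boxMinusHi n d)) :
    k ≠ 0 ∧ dIdx hn k = d ∧ k (lIdx hn k) < 0 := by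
  set r := (d - 1) / n with hr
  set l0 := (d - 1) % n with hl0
  have hl0n : l0 < n := Nat.mod_lt _ hn
  rw [Finset.mem_Icc] at hk
  obtain ⟨hlo, hhi⟩ := hk
  have hp2 : (2:ℤ)^(r+1) = 2 * 2^r := by ring
  have hrp : (1:ℤ) ≤ 2^r := one_le_pow₀ (by norm_num)
  have hposl : k ⟨l0, hl0n⟩ ≤ -(2^r) := by
    have := hhi ⟨l0, hl0n⟩
    simpa only [boxMinusHi, ← hr, ← hl0, lt_irrefl, if_neg (lt_irrefl l0), if_pos rfl, ↓reduceIte] using this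
  have hbig : 2^r ≤ (k ⟨l0, hl0n⟩).natAbs := by
    have : ((2^r : ℕ) : ℤ) ≤ |k ⟨l0, hl0n⟩| := by
      push_cast
      rw [abs_of_neg (by omega)]
      omega
    rw [Int.abs_eq_natAbs, Nat.cast_le] at this
    exact this
  have hall : ∀ i, (k i).natAbs ≤ 2^(r+1) - 1 := by
    intro i
    apply natAbs_le_of
    rw [cast_pow_sub_one, abs_le]
    have h1 := hlo i
    have h2 := hhi i
    simp only [boxMinusLo, boxMinusHi] at h1 h2
    rw [← hr, ← hl0] at h1 h2
    rcases lt_trichotomy (i:ℕ) l0 with h | h | h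
    · rw [if_pos (le_of_lt h)] at h1
      rw [if_pos h] at h2
      constructor <;> omega
    · rw [if_pos (le_of_eq h)] at h1
      rw [if_neg (by omega), if_pos h] at h2
      constructor <;> omega
    · rw [if_neg (by omega)] at h1
      rw [if_neg (by omega), if_neg (by omega)] at h2
      constructor <;> omega
  have hsmall : ∀ i : Fin n, l0 < (i:ℕ) → (k i).natAbs ≤ 2^r - 1 := by
    intro i hi
    apply natAbs_le_of
    rw [cast_pow_sub_one, abs_le]
    have h1 := hlo i
    have h2 := hhi i
    simp only [boxMinusLo, boxMinusHi] at h1 h2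
    rw [← hr, ← hl0] at h1 h2
    rw [if_neg (by omega)] at h1
    rw [if_neg (by omega), if_neg (by omega)] at h2
    constructor <;> omega
  obtain ⟨hk0, hlidx, hdidx⟩ := dIdx_eq_of_bounds hn hl0n hbig hall hsmall
  refine ⟨hk0, ?_, ?_⟩
  · rw [hdidx, hr, hl0]
    have := Nat.div_add_mod (d - 1) n
    omega
  · rw [hlidx]
    omega


lemma decomp (hn : 0 < n) {W : Type*} [AddCommGroup W] (z : (Fin n → ℤ) → W)
    (T : Finset ℕ) (h0 : 0 ∈ T)
    (hT : ∀ k, z k ≠ 0 → k ≠ 0 → dIdx hn k ∈ T) (k : Fin n → ℤ) :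
    z k = ∑ d ∈ T, (if d = 0 then (if k ∈ Finset.Icc (0 : Fin n → ℤ) 0 then z k else 0)
      else ((if k ∈ Finset.Icc (boxPlusLo n d) (boxPlusHi n d) then z k else 0) +
        (if k ∈ Finset.Icc (boxMinusLo n d) (boxMinusHi n d) then z k else 0))) := by
  classical
  by_cases hz : z k = 0
  · rw [hz]
    rw [Finset.sum_eq_zero]
    intro d _
    by_cases hd : d = 0 <;> simp [hd]
  · have hzero_mem : k ∈ Finset.Icc (0 : Fin n → ℤ) 0 ↔ k = 0 := by
      rw [Finset.mem_Icc]
      constructor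
      · rintro ⟨h1, h2⟩; exact le_antisymm h2 h1
      · rintro rfl; exact ⟨le_refl _, le_refl _⟩
    by_cases hk0 : k = 0
    · rw [Finset.sum_eq_single_of_mem 0 h0]
      · rw [if_pos rfl, if_pos (hzero_mem.2 hk0)]
      · intro d _ hd
        rw [if_neg hd]
        rw [if_neg (fun h => (mem_plus_uniq hn (Nat.pos_of_ne_zero hd) h).1 hk0),
          if_neg (fun h => (mem_minus_uniq hn (Nat.pos_of_ne_zero hd) h).1 hk0)]
        simp
    · have hd := hT k hz hk0
      have hdne : dIdx hn k ≠ 0 := by rw [dIdx]; omega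
      rw [Finset.sum_eq_single_of_mem (dIdx hn k) hd]
      · rw [if_neg hdne]
        rcases dIdx_mem hn hk0 with ⟨hpos, hmem⟩ | ⟨hneg, hmem⟩
        · rw [if_pos hmem,
            if_neg (fun h => absurd (mem_minus_uniq hn (Nat.pos_of_ne_zero hdne) h).2.2
              (by omega)), add_zero]
        · rw [if_pos hmem,
            if_neg (fun h => absurd (mem_plus_uniq hn (Nat.pos_of_ne_zero hdne) h).2.2
              (by omega)), zero_add]
      · intro d _ hdne'
        by_cases hd0 : d = 0
        · subst hd0
          rw [if_pos rfl, if_neg (fun h => hk0 (hzero_mem.1 h))]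
        · rw [if_neg hd0]
          rw [if_neg (fun h => hdne' ((mem_plus_uniq hn (Nat.pos_of_ne_zero hd0) h).2.1).symm),
            if_neg (fun h => hdne' ((mem_minus_uniq hn (Nat.pos_of_ne_zero hd0) h).2.1).symm)]
          simp

lemma nat_le_four_pow (m : ℕ) : m + 1 ≤ 4 ^ m := by
  induction m with
  | zero => norm_num
  | succ m ih =>
    have : 4 ^ (m+1) = 4 * 4^m := by ring
    omega


end S13
namespace S13

lemma zToR_apply (k : Fin n → ℤ) (i : Fin n) : zToR n k i = (k i : ℝ) := rfl

lemma norm_zToR_lower (hn : 0 < n) (k : Fin n → ℤ) : ((mAbs k : ℕ) : ℝ) ≤ ‖zToR n k‖ := by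
  haveI : Nonempty (Fin n) := ⟨⟨0, hn⟩⟩
  obtain ⟨i0, _, hi0⟩ := Finset.exists_mem_eq_sup Finset.univ Finset.univ_nonempty
    (fun i => (k i).natAbs)
  rw [EuclideanSpace.norm_eq]
  have h1 : ((mAbs k : ℕ) : ℝ) ^ 2 ≤ ∑ i, ‖zToR n k i‖ ^ 2 := by
    have hterm : ((mAbs k : ℕ) : ℝ) ^ 2 = ‖zToR n k i0‖ ^ 2 := by
      rw [zToR_apply, Real.norm_eq_abs, sq_abs, mAbs, hi0]
      push_cast [Nat.cast_natAbs]
      rw [← abs_pow, abs_of_nonneg (by positivity)]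
    rw [hterm]
    exact Finset.single_le_sum (f := fun i => ‖zToR n k i‖ ^ 2)
      (fun i _ => by positivity) (Finset.mem_univ i0)
  calc ((mAbs k : ℕ) : ℝ) = Real.sqrt (((mAbs k : ℕ) : ℝ) ^ 2) := by
        rw [Real.sqrt_sq (by positivity)]
    _ ≤ _ := Real.sqrt_le_sqrt h1

lemma norm_zToR_upper (hn : 0 < n) (k : Fin n → ℤ) :
    ‖zToR n k‖ ≤ (2:ℝ) ^ (n - 1) * ((mAbs k : ℕ) : ℝ) := by
  rw [EuclideanSpace.norm_eq]
  have h1 : ∑ i, ‖zToR n k i‖ ^ 2 ≤ (n : ℝ) * ((mAbs k : ℕ) : ℝ) ^ 2 := by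
    calc ∑ i, ‖zToR n k i‖ ^ 2 ≤ ∑ _i : Fin n, ((mAbs k : ℕ) : ℝ) ^ 2 := by
          refine Finset.sum_le_sum fun i _ => ?_
          rw [zToR_apply, Real.norm_eq_abs, sq_abs]
          have : ((k i).natAbs : ℝ) ≤ ((mAbs k : ℕ) : ℝ) := by exact_mod_cast mAbs_le k i
          calc ((k i : ℝ)) ^ 2 = ((k i).natAbs : ℝ) ^ 2 := by
                push_cast [Nat.cast_natAbs]
                rw [← abs_pow, abs_of_nonneg (by positivity)]
            _ ≤ _ := by exact pow_le_pow_left₀ (by positivity) this 2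
      _ = (n : ℝ) * ((mAbs k : ℕ) : ℝ) ^ 2 := by
          rw [Finset.sum_const, Finset.card_univ, Fintype.card_fin, nsmul_eq_mul]
  have h2 : (n : ℝ) ≤ ((2:ℝ) ^ (n - 1)) ^ 2 := by
    have := nat_le_four_pow (n - 1)
    have hn' : n ≤ 4 ^ (n - 1) := by omega
    calc (n : ℝ) ≤ ((4 ^ (n-1) : ℕ) : ℝ) := by exact_mod_cast hn'
      _ = ((2:ℝ) ^ (n-1)) ^ 2 := by
          push_cast
          rw [show (4:ℝ) = 2^2 by norm_num, ← pow_mul, ← pow_mul, mul_comm]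
  calc Real.sqrt (∑ i, ‖zToR n k i‖ ^ 2)
      ≤ Real.sqrt (((2:ℝ) ^ (n - 1)) ^ 2 * ((mAbs k : ℕ) : ℝ) ^ 2) := by
        apply Real.sqrt_le_sqrt
        refine le_trans h1 ?_
        exact mul_le_mul_of_nonneg_right h2 (by positivity)
    _ = (2:ℝ) ^ (n - 1) * ((mAbs k : ℕ) : ℝ) := by
        rw [← mul_pow, Real.sqrt_sq (by positivity)]

lemma rIdx_le {j : ℕ} (hn : 0 < n) {k : Fin n → ℤ} (hk : k ≠ 0)
    (hΩ : zToR n k ∈ OmegaSet n j) : rIdx k ≤ j + 1 ∧ j ≤ n + rIdx k := by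
  have hub : ‖zToR n k‖ ≤ (2:ℝ) ^ (j + 1) := by
    by_cases hj : j = 0
    · subst hj
      rw [OmegaSet, if_pos rfl] at hΩ
      simpa using le_trans hΩ (by norm_num)
    · rw [OmegaSet, if_neg hj] at hΩ
      exact hΩ.2
  constructor
  · have c1 : ((2:ℝ))^(rIdx k) ≤ 2 ^ (j+1) := by
      calc ((2:ℝ))^(rIdx k) = ((2 ^ (rIdx k) : ℕ) : ℝ) := by push_cast; ring
        _ ≤ ((mAbs k : ℕ) : ℝ) := by exact_mod_cast pow_rIdx_le hk
        _ ≤ ‖zToR n k‖ := norm_zToR_lower hn k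
        _ ≤ _ := hub
    exact (pow_le_pow_iff_right₀ (by norm_num : (1:ℝ) < 2)).1 c1
  · by_cases hj : j = 0
    · omega
    · rw [OmegaSet, if_neg hj] at hΩ
      have hlb := hΩ.1
      have c2 : ((2:ℝ))^(j-1) < 2 ^ (n + rIdx k) := by
        calc ((2:ℝ))^(j-1) ≤ ‖zToR n k‖ := hlb
          _ ≤ (2:ℝ) ^ (n - 1) * ((mAbs k : ℕ) : ℝ) := norm_zToR_upper hn k
          _ < (2:ℝ) ^ (n - 1) * ((2 ^ (rIdx k + 1) : ℕ) : ℝ) := by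
              apply mul_lt_mul_of_pos_left _ (by positivity)
              exact_mod_cast mAbs_lt_pow k
          _ = 2 ^ (n + rIdx k) := by
              push_cast
              rw [← pow_add]
              congr 1
              omega
      have := (pow_lt_pow_iff_right₀ (by norm_num : (1:ℝ) < 2)).1 c2
      omega

lemma dIdx_range {j : ℕ} (hn : 0 < n) {k : Fin n → ℤ} (hk : k ≠ 0)
    (hΩ : zToR n k ∈ OmegaSet n j) :
    dIdx hn k ∈ Finset.Icc (n * (j - n) + 1) (n * (j + 2)) := by
  obtain ⟨h1, h2⟩ := rIdx_le hn hk hΩ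
  have hl : (lIdx hn k : ℕ) < n := (lIdx hn k).2
  rw [Finset.mem_Icc, dIdx]
  constructor
  · have h3 : j - n ≤ rIdx k := by omega
    have := Nat.mul_le_mul_left n h3
    omega
  · have h4 := Nat.mul_le_mul_left n h1
    have h5 : n * (j + 2) = n * (j + 1) + n := by ring
    omega


variable {E : Type*} [NormedAddCommGroup E] [NormedSpace ℂ E]

lemma box_mult {p C : ℝ} (hp : 1 ≤ p) (hC : IsMult n p (Riesz n E) C) (hC0 : 0 ≤ C)
    (α β : Fin n → ℤ) (M : (Fin n → ℤ) → (E →L[ℂ] E)) (A : Finset (Fin n → ℤ))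
    (v : (Fin n → ℤ) → E) :
    pnorm n p (trig n A fun k => if k ∈ Finset.Icc α β then M k (v k) else 0) ≤
      varBox α β M * ((2 * C) ^ n * pnorm n p (trig n A v)) := by
  classical
  have hp0 : (0:ℝ) < p := lt_of_lt_of_le one_pos hp
  set D : (Fin n → ℤ) → (E →L[ℂ] E) :=
    fun ξ => dGamma α (fun j => decide (ξ j ≠ α j)) (restrictBox α β M) ξ with hD
  have hptwise : ∀ k, (if k ∈ Finset.Icc α β then M k (v k) else 0) =
      ∑ ξ ∈ Finset.Icc α β, (if k ∈ Finset.Icc ξ β then (D ξ) (v k) else 0) := by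
    intro k
    by_cases hk : k ∈ Finset.Icc α β
    · rw [if_pos hk]
      have habel := abel_sum α β M k hk
      have h1 : M k (v k) = ∑ ξ ∈ Finset.Icc α k, (D ξ) (v k) := by
        rw [habel]
        rw [← ContinuousLinearMap.sum_apply]
      rw [h1]
      have hsub : Finset.Icc α k = (Finset.Icc α β).filter (fun ξ => ξ ≤ k) := by
        ext ξ
        rw [Finset.mem_filter, Finset.mem_Icc, Finset.mem_Icc]
        rw [Finset.mem_Icc] at hk
        constructor
        · rintro ⟨h1', h2'⟩; exact ⟨⟨h1', le_trans h2' hk.2⟩, h2'⟩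
        · rintro ⟨⟨h1', _⟩, h3'⟩; exact ⟨h1', h3'⟩
      rw [hsub, Finset.sum_filter]
      refine Finset.sum_congr rfl fun ξ hξ => ?_
      rw [Finset.mem_Icc] at hk hξ
      by_cases hle : ξ ≤ k
      · rw [if_pos hle, if_pos (Finset.mem_Icc.2 ⟨hle, hk.2⟩)]
      · rw [if_neg hle, if_neg (fun h => hle (Finset.mem_Icc.1 h).1)]
    · rw [if_neg hk]
      rw [Finset.sum_eq_zero]
      intro ξ hξ
      rw [Finset.mem_Icc] at hξ
      rw [if_neg]
      intro h
      rw [Finset.mem_Icc] at h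
      exact hk (Finset.mem_Icc.2 ⟨le_trans hξ.1 h.1, h.2⟩)
  have hsplit : trig n A (fun k => if k ∈ Finset.Icc α β then M k (v k) else 0) =
      fun t => ∑ ξ ∈ Finset.Icc α β,
        trig n A (fun k => if k ∈ Finset.Icc ξ β then (D ξ) (v k) else 0) t := by
    funext t
    rw [trig]
    calc ∑ k ∈ A, ek n k t • (if k ∈ Finset.Icc α β then M k (v k) else 0)
        = ∑ k ∈ A, ∑ ξ ∈ Finset.Icc α β,
            ek n k t • (if k ∈ Finset.Icc ξ β then (D ξ) (v k) else 0) := by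
          refine Finset.sum_congr rfl fun k _ => ?_
          rw [hptwise k, Finset.smul_sum]
      _ = ∑ ξ ∈ Finset.Icc α β, ∑ k ∈ A,
            ek n k t • (if k ∈ Finset.Icc ξ β then (D ξ) (v k) else 0) := Finset.sum_comm
      _ = _ := rfl
  rw [hsplit]
  calc pnorm n p (fun t => ∑ ξ ∈ Finset.Icc α β,
          trig n A (fun k => if k ∈ Finset.Icc ξ β then (D ξ) (v k) else 0) t)
      ≤ ∑ ξ ∈ Finset.Icc α β,
          pnorm n p (trig n A (fun k => if k ∈ Finset.Icc ξ β then (D ξ) (v k) else 0)) :=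
        pnorm_sum_le hp _ _ (fun ξ _ => memℒp_trig _ _ _)
    _ ≤ ∑ ξ ∈ Finset.Icc α β, ‖D ξ‖ * ((2 * C) ^ n * pnorm n p (trig n A v)) := by
        refine Finset.sum_le_sum fun ξ _ => ?_
        have hite : (fun k => if k ∈ Finset.Icc ξ β then (D ξ) (v k) else 0) =
            fun k => (D ξ) (if k ∈ Finset.Icc ξ β then v k else 0) := by
          funext k
          by_cases h : k ∈ Finset.Icc ξ β
          · rw [if_pos h, if_pos h]
          · rw [if_neg h, if_neg h, map_zero]
        rw [hite]
        calc pnorm n p (trig n A fun k => (D ξ) (if k ∈ Finset.Icc ξ β then v k else 0))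
            ≤ ‖D ξ‖ * pnorm n p (trig n A fun k => if k ∈ Finset.Icc ξ β then v k else 0) :=
              pnorm_opapply hp0 A _ (D ξ)
          _ ≤ ‖D ξ‖ * ((2 * C) ^ n * pnorm n p (trig n A v)) :=
              mul_le_mul_of_nonneg_left (mult_box hp hC hC0 ξ β A v) (norm_nonneg _)
    _ = varBox α β M * ((2 * C) ^ n * pnorm n p (trig n A v)) := by
        rw [varBox, Finset.sum_mul]

lemma varBox_nonneg (α β : Fin n → ℤ) (M : (Fin n → ℤ) → (E →L[ℂ] E)) :
    0 ≤ varBox α β M :=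
  Finset.sum_nonneg fun _ _ => norm_nonneg _

lemma varD_nonneg (d : ℕ) (M : (Fin n → ℤ) → (E →L[ℂ] E)) : 0 ≤ varD n d M := by
  rw [varD]
  split
  · exact varBox_nonneg _ _ _
  · exact add_nonneg (varBox_nonneg _ _ _) (varBox_nonneg _ _ _)


lemma perj (hn : 0 < n) {p C CM : ℝ} (hp : 1 ≤ p) (hC : IsMult n p (Riesz n E) C)
    (hC0 : 0 ≤ C) {M : (Fin n → ℤ) → (E →L[ℂ] E)} (hMv : ∀ d, varD n d M ≤ CM)
    (j : ℕ) (A : Finset (Fin n → ℤ)) (y : (Fin n → ℤ) → E)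
    (hy : ∀ k, y k ≠ 0 → zToR n k ∈ OmegaSet n j) :
    pnorm n p (trig n A fun k => M k (y k)) ≤
      ((n * (n + 2) + 1 : ℕ) : ℝ) * (CM * ((2 * C) ^ n * pnorm n p (trig n A y))) := by
  classical
  have hp0 : (0:ℝ) < p := lt_of_lt_of_le one_pos hp
  have hCM0 : 0 ≤ CM := le_trans (varD_nonneg 0 M) (hMv 0)
  have hX0 : 0 ≤ (2 * C) ^ n * pnorm n p (trig n A y) :=
    mul_nonneg (by positivity) (pnorm_nonneg _ _)
  set T : Finset ℕ := insert 0 (Finset.Icc (n * (j - n) + 1) (n * (j + 2))) with hT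
  set Fd : ℕ → (Fin n → ℤ) → E := fun d k =>
    (if d = 0 then (if k ∈ Finset.Icc (0 : Fin n → ℤ) 0 then M k (y k) else 0)
      else ((if k ∈ Finset.Icc (boxPlusLo n d) (boxPlusHi n d) then M k (y k) else 0) +
        (if k ∈ Finset.Icc (boxMinusLo n d) (boxMinusHi n d) then M k (y k) else 0))) with hFd
  have hTcard : T.card ≤ n * (n + 2) + 1 := by
    calc T.card ≤ (Finset.Icc (n * (j - n) + 1) (n * (j + 2))).card + 1 :=
          Finset.card_insert_le _ _
      _ ≤ n * (n + 2) + 1 := by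
          rw [Nat.card_Icc]
          have h1 : j + 2 ≤ (j - n) + (n + 2) := by omega
          have h2 := Nat.mul_le_mul_left n h1
          have h3 : n * ((j - n) + (n + 2)) = n * (j - n) + n * (n + 2) := by ring
          omega
  have hdec : ∀ k, M k (y k) = ∑ d ∈ T, Fd d k := by
    intro k
    exact decomp hn (fun k => M k (y k)) T (Finset.mem_insert_self _ _)
      (fun k hz hk0 => Finset.mem_insert_of_mem
        (dIdx_range hn hk0 (hy k (fun h => hz (by show M k (y k) = 0; rw [h, map_zero]))))) k
  have hsplit : trig n A (fun k => M k (y k)) = fun t => ∑ d ∈ T, trig n A (Fd d) t := by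
    funext t
    rw [trig]
    calc ∑ k ∈ A, ek n k t • M k (y k)
        = ∑ k ∈ A, ∑ d ∈ T, ek n k t • Fd d k := by
          refine Finset.sum_congr rfl fun k _ => ?_
          rw [hdec k, Finset.smul_sum]
      _ = ∑ d ∈ T, ∑ k ∈ A, ek n k t • Fd d k := Finset.sum_comm
      _ = _ := rfl
  rw [hsplit]
  have hbound : ∀ d ∈ T, pnorm n p (trig n A (Fd d)) ≤
      CM * ((2 * C) ^ n * pnorm n p (trig n A y)) := by
    intro d _
    by_cases hd : d = 0
    · have : Fd d = fun k => if k ∈ Finset.Icc (0 : Fin n → ℤ) 0 then M k (y k) else 0 := by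
        funext k
        rw [hFd]
        simp [hd]
      rw [this]
      refine le_trans (box_mult hp hC hC0 0 0 M A y) ?_
      apply mul_le_mul_of_nonneg_right _ hX0
      refine le_trans (le_of_eq ?_) (hMv 0)
      rw [varD, if_pos rfl]
    · have : trig n A (Fd d) = fun t =>
          trig n A (fun k => if k ∈ Finset.Icc (boxPlusLo n d) (boxPlusHi n d)
            then M k (y k) else 0) t +
          trig n A (fun k => if k ∈ Finset.Icc (boxMinusLo n d) (boxMinusHi n d)
            then M k (y k) else 0) t := by
        funext t
        rw [trig, trig, trig, ← Finset.sum_add_distrib]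
        refine Finset.sum_congr rfl fun k _ => ?_
        rw [hFd]
        simp only [if_neg hd]
        rw [smul_add]
      rw [this]
      calc pnorm n p _
          ≤ pnorm n p (trig n A (fun k => if k ∈ Finset.Icc (boxPlusLo n d) (boxPlusHi n d)
              then M k (y k) else 0)) +
            pnorm n p (trig n A (fun k => if k ∈ Finset.Icc (boxMinusLo n d) (boxMinusHi n d)
              then M k (y k) else 0)) :=
            pnorm_add_le hp (memℒp_trig _ _ _) (memℒp_trig _ _ _)
        _ ≤ varBox (boxPlusLo n d) (boxPlusHi n d) M *
              ((2 * C) ^ n * pnorm n p (trig n A y)) +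
            varBox (boxMinusLo n d) (boxMinusHi n d) M *
              ((2 * C) ^ n * pnorm n p (trig n A y)) :=
            add_le_add (box_mult hp hC hC0 _ _ M A y) (box_mult hp hC hC0 _ _ M A y)
        _ = varD n d M * ((2 * C) ^ n * pnorm n p (trig n A y)) := by
            rw [varD, if_neg hd, add_mul]
        _ ≤ CM * ((2 * C) ^ n * pnorm n p (trig n A y)) :=
            mul_le_mul_of_nonneg_right (hMv d) hX0
  calc pnorm n p (fun t => ∑ d ∈ T, trig n A (Fd d) t)
      ≤ ∑ d ∈ T, pnorm n p (trig n A (Fd d)) :=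
        pnorm_sum_le hp _ _ (fun d _ => memℒp_trig _ _ _)
    _ ≤ T.card • (CM * ((2 * C) ^ n * pnorm n p (trig n A y))) :=
        Finset.sum_le_card_nsmul _ _ _ hbound
    _ = (T.card : ℝ) * (CM * ((2 * C) ^ n * pnorm n p (trig n A y))) := by
        rw [nsmul_eq_mul]
    _ ≤ _ := by
        apply mul_le_mul_of_nonneg_right _ (mul_nonneg hCM0 hX0)
        exact_mod_cast hTcard

end S13

end


/-- The sufficiency part of Theorem 5.9 (the main result): if `E` is a UMD space
(the Riesz multiplier is a discrete `L^p`-Fourier multiplier), `s ∈ ℝ`, `1 < p < ∞`,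
`1 ≤ q ≤ ∞`, and `M : ℤⁿ → 𝓛(E)` is uniformly bounded and of bounded variation with
respect to the coarse decomposition of `ℤⁿ`, then `M` is a Fourier multiplier on
`B^s_{p,q}(𝕋ⁿ,E)`, stated here for `E`-valued trigonometric polynomials. -/
theorem statement13 (n : ℕ) (hn : 0 < n) (s : ℝ) (p : ℝ) (hp : 1 < p)
    (q : ℝ≥0∞) (hq : 1 ≤ q) (E : Type*) [NormedAddCommGroup E] [NormedSpace ℂ E]
    (hUMD : ∃ C > (0 : ℝ), IsMult n p (Riesz n E) C)
    (φ : ℕ → SchwartzMap (EuclideanSpace ℝ (Fin n)) ℝ) (hφ : IsResolution n φ)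
    (M : (Fin n → ℤ) → (E →L[ℂ] E))
    (hMb : ∃ B : ℝ, ∀ k, ‖M k‖ ≤ B)
    (hMv : ∃ C_M : ℝ, ∀ d : ℕ, varD n d M ≤ C_M) :
    ∃ C > (0 : ℝ), ∀ x : (Fin n → ℤ) → E, (Function.support x).Finite →
      besov n s p q φ (fun k => (M k) (x k)) ≤ C * besov n s p q φ x := by
  classical
  obtain ⟨CR, hCRpos, hCR⟩ := hUMD
  obtain ⟨CM, hMv⟩ := hMv
  have hp1 : (1:ℝ) ≤ p := le_of_lt hp
  have hp0 : (0:ℝ) < p := lt_of_lt_of_le one_pos hp1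
  have hCM0 : 0 ≤ CM := le_trans (S13.varD_nonneg 0 M) (hMv 0)
  set C0 : ℝ := ((n * (n + 2) + 1 : ℕ) : ℝ) * (CM * (2 * CR) ^ n) with hC0def
  have hC00 : 0 ≤ C0 := by positivity
  refine ⟨C0 + 1, by linarith, ?_⟩
  intro x hx
  set A : Finset (Fin n → ℤ) := hx.toFinset with hA
  have hAmem : ∀ k, x k ≠ 0 → k ∈ A := fun k hk => hx.mem_toFinset.2 hk
  set y : ℕ → (Fin n → ℤ) → E := fun j k => φ j (zToR n k) • x k with hy
  -- identify besov building blocks with trig sums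
  have ha_eq : ∀ j, (fun t => ∑ᶠ k, ek n k t • (φ j (zToR n k) • x k)) =
      S13.trig n A (y j) := by
    intro j
    funext t
    rw [finsum_eq_finset_sum_of_support_subset _ (s := A) (by
      intro k hk
      rw [Function.mem_support] at hk
      by_contra h'
      have hxk : x k = 0 := by
        by_contra h''
        exact h' (hAmem k h'')
      exact hk (by show ek n k t • (φ j (zToR n k) • x k) = 0
                   rw [hxk, smul_zero, smul_zero]))]
    rfl
  have hb_eq : ∀ j, (fun t => ∑ᶠ k, ek n k t • (φ j (zToR n k) • M k (x k))) =
      S13.trig n A (fun k => M k (y j k)) := by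
    intro j
    funext t
    rw [finsum_eq_finset_sum_of_support_subset _ (s := A) (by
      intro k hk
      rw [Function.mem_support] at hk
      by_contra h'
      have hxk : x k = 0 := by
        by_contra h''
        exact h' (hAmem k h'')
      exact hk (by rw [hxk, map_zero, smul_zero, smul_zero]))]
    refine Finset.sum_congr rfl fun k _ => ?_
    show ek n k t • (φ j (zToR n k) • M k (x k)) =
      ek n k t • M k (φ j (zToR n k) • x k)
    rw [(M k).map_smul_of_tower]
  set a : ℕ → ℝ := fun j => (2:ℝ) ^ (s * j) * pnorm n p (S13.trig n A (y j)) with haj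
  set b : ℕ → ℝ := fun j =>
    (2:ℝ) ^ (s * j) * pnorm n p (S13.trig n A (fun k => M k (y j k))) with hbj
  have ha0 : ∀ j, 0 ≤ a j := fun j =>
    mul_nonneg (Real.rpow_nonneg (by norm_num) _) (S13.pnorm_nonneg _ _)
  -- the key per-j estimate
  have hkey : ∀ j, b j ≤ (C0 + 1) * a j := by
    intro j
    have hyΩ : ∀ k, y j k ≠ 0 → zToR n k ∈ OmegaSet n j := by
      intro k hk
      have hφne : φ j (zToR n k) ≠ 0 := by
        intro h
        exact hk (by rw [hy]; show φ j (zToR n k) • x k = 0; rw [h, zero_smul])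
      have : zToR n k ∈ tsupport (φ j) := subset_closure (by simpa using hφne)
      exact hφ.1 j this
    have := S13.perj hn hp1 hCR (le_of_lt hCRpos) hMv j A (y j) hyΩ
    calc b j ≤ (2:ℝ) ^ (s * j) *
          (((n * (n + 2) + 1 : ℕ) : ℝ) * (CM * ((2 * CR) ^ n * pnorm n p (S13.trig n A (y j))))) := by
          rw [hbj]
          exact mul_le_mul_of_nonneg_left this (Real.rpow_nonneg (by norm_num) _)
      _ = C0 * a j := by rw [hC0def, haj]; ring
      _ ≤ (C0 + 1) * a j := by
          have := ha0 j
          nlinarith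
  -- vanishing for large j
  have hvan : ∃ J : ℕ, ∀ j, J ≤ j → (a j = 0 ∧ b j = 0) := by
    set R : ℝ := ∑ k ∈ A, ‖zToR n k‖ with hR
    have hRk : ∀ k ∈ A, ‖zToR n k‖ ≤ R :=
      fun k hk => Finset.single_le_sum (f := fun k => ‖zToR n k‖)
        (fun i _ => norm_nonneg _) hk
    obtain ⟨J, hJ⟩ : ∃ J : ℕ, R < 2 ^ J := pow_unbounded_of_one_lt R (by norm_num)
    refine ⟨J + 1, fun j hj => ?_⟩
    have hyzero : y j = fun _ => 0 := by
      funext k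
      rw [hy]
      show φ j (zToR n k) • x k = 0
      by_cases hxk : x k = 0
      · rw [hxk, smul_zero]
      · have hk : k ∈ A := hAmem k hxk
        have hφ0 : φ j (zToR n k) = 0 := by
          apply image_eq_zero_of_notMem_tsupport
          intro hts
          have hΩ := hφ.1 j hts
          rw [OmegaSet, if_neg (by omega : ¬ j = 0)] at hΩ
          have h1 : (2:ℝ) ^ (j - 1) ≤ ‖zToR n k‖ := hΩ.1
          have h2 : (2:ℝ) ^ J ≤ 2 ^ (j - 1) :=
            pow_le_pow_right₀ (by norm_num) (by omega)
          have := le_trans h2 (le_trans h1 (hRk k hk))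
          linarith
        rw [hφ0, zero_smul]
    have htz : S13.trig n A (y j) = fun _ => (0:E) := by
      funext t
      rw [S13.trig, hyzero]
      simp
    have htz2 : S13.trig n A (fun k => M k (y j k)) = fun _ => (0:E) := by
      funext t
      rw [S13.trig, hyzero]
      simp
    constructor
    · rw [haj]
      show (2:ℝ) ^ (s * j) * pnorm n p (S13.trig n A (y j)) = 0
      rw [htz, S13.pnorm_zero hp0, mul_zero]
    · rw [hbj]
      show (2:ℝ) ^ (s * j) * pnorm n p (S13.trig n A (fun k => M k (y j k))) = 0
      rw [htz2, S13.pnorm_zero hp0, mul_zero]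
  obtain ⟨J, hJ⟩ := hvan
  -- besov in terms of a and b
  have hbesx : besov n s p q φ x = if q = ∞ then ⨆ j, a j
      else (∑' j : ℕ, (a j) ^ q.toReal) ^ (1 / q.toReal) := by
    rw [besov]
    split_ifs with h
    · exact iSup_congr fun j => by rw [ha_eq j]
    · congr 1
      exact tsum_congr fun j => by rw [ha_eq j]
  have hbesMx : besov n s p q φ (fun k => M k (x k)) = if q = ∞ then ⨆ j, b j
      else (∑' j : ℕ, (b j) ^ q.toReal) ^ (1 / q.toReal) := by
    rw [besov]
    split_ifs with h
    · exact iSup_congr fun j => by rw [hb_eq j]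
    · congr 1
      exact tsum_congr fun j => by rw [hb_eq j]
  rw [hbesx, hbesMx]
  by_cases hqi : q = ∞
  · rw [if_pos hqi, if_pos hqi]
    -- sup case
    have hbdd : BddAbove (Set.range a) := by
      refine ⟨∑ i ∈ Finset.range (J + 1), a i, ?_⟩
      rintro _ ⟨j, rfl⟩
      by_cases hj : j ≤ J
      · exact Finset.single_le_sum (f := a) (fun i _ => ha0 i)
          (Finset.mem_range.2 (by omega))
      · rw [(hJ j (by omega)).1]
        exact Finset.sum_nonneg fun i _ => ha0 i
    apply ciSup_le
    intro j
    calc b j ≤ (C0 + 1) * a j := hkey j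
      _ ≤ (C0 + 1) * ⨆ i, a i :=
        mul_le_mul_of_nonneg_left (le_ciSup hbdd j) (by linarith)
  · rw [if_neg hqi, if_neg hqi]
    have hq1 : (1:ℝ) ≤ q.toReal := by
      have := ENNReal.toReal_mono hqi hq
      simpa using this
    have hq0 : (0:ℝ) < q.toReal := lt_of_lt_of_le one_pos hq1
    have hsa : Summable (fun j => (a j) ^ q.toReal) := by
      apply summable_of_ne_finset_zero (s := Finset.range (J + 1))
      intro j hj
      rw [(hJ j (by simp only [Finset.mem_range, not_lt] at hj; omega)).1,
        Real.zero_rpow hq0.ne']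
    have hsb : Summable (fun j => (b j) ^ q.toReal) := by
      apply summable_of_ne_finset_zero (s := Finset.range (J + 1))
      intro j hj
      rw [(hJ j (by simp only [Finset.mem_range, not_lt] at hj; omega)).2,
        Real.zero_rpow hq0.ne']
    have hb0 : ∀ j, 0 ≤ b j := fun j =>
      mul_nonneg (Real.rpow_nonneg (by norm_num) _) (S13.pnorm_nonneg _ _)
    have hsum_le : ∑' j : ℕ, (b j) ^ q.toReal ≤
        (C0 + 1) ^ q.toReal * ∑' j : ℕ, (a j) ^ q.toReal := by
      rw [← tsum_mul_left]
      refine hsb.tsum_le_tsum (fun j => ?_) (hsa.mul_left _)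
      rw [← Real.mul_rpow (by linarith) (ha0 j)]
      exact Real.rpow_le_rpow (hb0 j) (hkey j) hq0.le
    have hS0 : 0 ≤ ∑' j : ℕ, (a j) ^ q.toReal :=
      tsum_nonneg fun j => Real.rpow_nonneg (ha0 j) _
    calc (∑' j : ℕ, (b j) ^ q.toReal) ^ (1 / q.toReal)
        ≤ ((C0 + 1) ^ q.toReal * ∑' j : ℕ, (a j) ^ q.toReal) ^ (1 / q.toReal) := by
          apply Real.rpow_le_rpow (tsum_nonneg fun j => Real.rpow_nonneg (hb0 j) _)
            hsum_le (by positivity)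
      _ = (C0 + 1) * (∑' j : ℕ, (a j) ^ q.toReal) ^ (1 / q.toReal) := by
          rw [Real.mul_rpow (by positivity) hS0, ← Real.rpow_mul (by linarith),
            mul_one_div_cancel hq0.ne', Real.rpow_one]
end

section
/- Let n ∈ ℕ, s ∈ ℝ, 1 < p < ∞, 1 ≤ q ≤ ∞, let E be a complex Banach space, and let (φ_j)_{j∈ℕ₀} be a resolution of unity satisfying properties (a)–(d) of [the construction lemma], i.e. φ_j ≥ 0, supp φ_j ⊊ Ω_j, φ_j(ξ) = 1 for |ξ| ∈ [7·2^{j−3}, 3·2^{j−1}] when j ≥ 3, and such ξ do not lie in supp φ_{j−1} ∩ supp φ_{j+1}. Suppose that for every uniformly bounded M : ℤⁿ → 𝓛(E) of bounded variation with respect to the coarse decomposition of ℤⁿ there exists C_M > 0 such that ‖(M(k)x_k)_k‖_{B^{s,φ}_{p,q}} ≤ C_M ‖(x_k)_k‖_{B^{s,φ}_{p,q}} for every finitely supported family (x_k)_{k∈ℤⁿ} in E. Then there exists C_p > 0 such that for every finitely supported family (y_k)_{k∈ℤ} in E: ‖Σ_{k≥0} e^{i k t} y_k‖_{L^p(𝕋,E)}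 ≤ C_p ‖Σ_{k∈ℤ} e^{i k t} y_k‖_{L^p(𝕋,E)}; that is, the one-dimensional Riesz projection is L^p-bounded, so E is a UMD space. -/
open MeasureTheory

open scoped ENNReal

/-- The character `e^{ikt}` on the one-dimensional torus. -/
noncomputable def ek1 (k : ℤ) (t : ℝ) : ℂ := Complex.exp (Complex.I * (k : ℂ) * (t : ℂ))

/-- `‖g‖_{L^p(𝕋,E)} = ((2π)^{-1} ∫_0^{2π} ‖g(t)‖^p dt)^{1/p}`. -/
noncomputable def pnorm1 (p : ℝ) {E : Type*} [NormedAddCommGroup E] (g : ℝ → E) : ℝ :=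
  ((2 * Real.pi)⁻¹ * ∫ t in Set.Icc (0 : ℝ) (2 * Real.pi), ‖g t‖ ^ p) ^ (1 / p)

section Part1
variable {n : ℕ} {V : Type*} [AddCommGroup V]

lemma mem_Icc_sub_single {α ξ0 : Fin n → ℤ} {ξ : Fin n → ℤ} (hξ : ξ ∈ Set.Icc α ξ0)
    {a : Fin n} (ha : ξ a ≠ α a) : ξ - Pi.single a 1 ∈ Set.Icc α ξ0 := by
  rw [Set.mem_Icc] at hξ ⊢
  obtain ⟨h1, h2⟩ := hξ
  refine ⟨fun i => ?_, fun i => ?_⟩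
  · have ha1 : α a ≤ ξ a := h1 a
    have hb : α i ≤ ξ i := h1 i
    simp only [Pi.sub_apply, Pi.single_apply]
    split_ifs with h
    · subst h; omega
    · omega
  · have hb : ξ i ≤ ξ0 i := h2 i
    simp only [Pi.sub_apply, Pi.single_apply]
    split_ifs with h <;> omega

lemma foldr_dOp_congr (α : Fin n → ℤ) (L : List (Fin n)) (F F' : (Fin n → ℤ) → V)
    (ξ0 : Fin n → ℤ) (h : ∀ y ∈ Set.Icc α ξ0, F y = F' y) :
    ∀ ξ ∈ Set.Icc α ξ0, L.foldr (dOp α) F ξ = L.foldr (dOp α) F' ξ := by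
  induction L with
  | nil => exact h
  | cons a L ih =>
    intro ξ hξ
    simp only [List.foldr_cons, dOp]
    by_cases hc : ξ a = α a
    · simp [hc]
    · rw [if_neg hc, if_neg hc, ih ξ hξ, ih (ξ - Pi.single a 1) (mem_Icc_sub_single hξ hc)]

/-- invariance of `F` along direction `j`. -/
def Inv1 (j : Fin n) (F : (Fin n → ℤ) → V) : Prop := ∀ x, F (x - Pi.single j 1) = F x

lemma inv1_dOp (α : Fin n → ℤ) {j j' : Fin n} (hjj : j' ≠ j) {F : (Fin n → ℤ) → V}
    (hF : Inv1 j F) : Inv1 j (dOp α j' F) := by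
  unfold Inv1 at hF ⊢
  intro x
  have hx : (x - Pi.single j 1 : Fin n → ℤ) j' = x j' := by
    simp only [Pi.sub_apply, Pi.single_apply, if_neg hjj, sub_zero]
  simp only [dOp, hx]
  by_cases hc : x j' = α j'
  · simp [hc]
  · rw [if_neg hc, if_neg hc, hF x, sub_right_comm, hF (x - Pi.single j' 1)]

lemma inv1_foldr (α : Fin n → ℤ) {j : Fin n} (L : List (Fin n)) (hL : j ∉ L)
    {F : (Fin n → ℤ) → V} (hF : Inv1 j F) : Inv1 j (L.foldr (dOp α) F) := by
  induction L with
  | nil => exact hF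
  | cons a L ih =>
    simp only [List.foldr_cons]
    exact inv1_dOp α (fun h => hL (List.mem_cons.mpr (Or.inl h.symm))) (ih (fun h => hL (List.mem_cons_of_mem a h)))

lemma foldr_dOp_eq_zero (α : Fin n → ℤ) {j : Fin n} (L : List (Fin n)) (hN : L.Nodup)
    (hj : j ∈ L) {F : (Fin n → ℤ) → V} (hF : Inv1 j F) :
    ∀ x, L.foldr (dOp α) F x = 0 := by
  induction L with
  | nil => cases hj
  | cons a L ih =>
    intro x
    rcases List.mem_cons.mp hj with rfl | hj'
    · have hinv : Inv1 j (L.foldr (dOp α) F) :=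
        inv1_foldr α L (List.nodup_cons.mp hN).1 hF
      simp only [List.foldr_cons, dOp]
      split
      · rfl
      · rw [hinv x, sub_self]
    · have h0 := ih (List.nodup_cons.mp hN).2 hj'
      simp only [List.foldr_cons, dOp]
      split
      · rfl
      · rw [h0, h0, sub_zero]

lemma filter_eq_singleton {ι : Type*} (p : ι → Bool) (L : List ι) (hN : L.Nodup) (i₀ : ι)
    (hi : i₀ ∈ L) (hp : ∀ j, p j = true ↔ j = i₀) : L.filter p = [i₀] := by
  induction L with
  | nil => cases hi
  | cons a L ih =>
    rcases List.mem_cons.mp hi with rfl | hi'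
    · rw [List.filter_cons_of_pos (by rw [hp])]
      have : L.filter p = [] := List.filter_eq_nil_iff.mpr (fun b hb hpb => by
        cases (hp b).mp hpb; exact (List.nodup_cons.mp hN).1 hb)
      rw [this]
    · have ha : ¬ (p a = true) := fun h => by
        cases (hp a).mp h; exact (List.nodup_cons.mp hN).1 hi'
      rw [List.filter_cons_of_neg (by simpa using ha)]
      exact ih (List.nodup_cons.mp hN).2 hi'

end Part1

section Part2
variable {n : ℕ} {V : Type*} [NormedAddCommGroup V]

lemma varBox_le_two (α β : Fin n → ℤ) (M : (Fin n → ℤ) → V) (i₀ : Fin n) (c : ℤ) (v : V)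
    (hv : ‖v‖ ≤ 1) (hM : ∀ y ∈ Finset.Icc α β, M y = if c ≤ y i₀ then v else 0) :
    varBox α β M ≤ 2 := by
  classical
  set F2 : (Fin n → ℤ) → V := fun y => if c ≤ y i₀ then v else 0 with hF2
  have key : ∀ ξ ∈ Finset.Icc α β,
      ‖dGamma α (fun j => decide (ξ j ≠ α j)) (restrictBox α β M) ξ‖ ≤
      (if ξ = α then (1:ℝ) else 0) + (if ξ = Function.update α i₀ c then (1:ℝ) else 0) := by
    intro ξ hξ
    have hξ' := Finset.mem_Icc.mp hξ
    have hag : dGamma α (fun j => decide (ξ j ≠ α j)) (restrictBox α β M) ξ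
        = dGamma α (fun j => decide (ξ j ≠ α j)) F2 ξ := by
      refine foldr_dOp_congr α _ _ _ ξ ?_ ξ ⟨hξ'.1, le_refl ξ⟩
      intro y hy
      have hy' : y ∈ Finset.Icc α β := Finset.mem_Icc.mpr ⟨hy.1, le_trans hy.2 hξ'.2⟩
      simp only [restrictBox, if_pos hy', hM y hy', hF2]
    rw [hag]
    by_cases hcase : ∃ j, j ≠ i₀ ∧ ξ j ≠ α j
    · obtain ⟨j, hji, hja⟩ := hcase
      have hz : dGamma α (fun j => decide (ξ j ≠ α j)) F2 ξ = 0 := by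
        refine foldr_dOp_eq_zero α _ ((List.nodup_finRange n).filter _)
          (List.mem_filter.mpr ⟨List.mem_finRange j, by simpa using hja⟩) ?_ ξ
        intro x
        have hxx : (x - Pi.single j 1 : Fin n → ℤ) i₀ = x i₀ := by
          simp only [Pi.sub_apply, Pi.single_apply, if_neg (Ne.symm hji), sub_zero]
        simp only [hF2, hxx]
      rw [hz, norm_zero]
      positivity
    · push_neg at hcase
      by_cases h0 : ξ i₀ = α i₀
      · have hξα : ξ = α := funext fun j => by
          by_cases hj : j = i₀
          · rw [hj]; exact h0
          · exact hcase j hj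
        have hfil : (List.finRange n).filter (fun j => decide (ξ j ≠ α j)) = [] :=
          List.filter_eq_nil_iff.mpr (fun b _ hb => by
            rw [decide_eq_true_eq] at hb; exact hb (hξα ▸ rfl))
        have : dGamma α (fun j => decide (ξ j ≠ α j)) F2 ξ = F2 ξ := by
          rw [dGamma, hfil, List.foldr_nil]
        rw [this, if_pos hξα]
        have : ‖F2 ξ‖ ≤ 1 := by
          simp only [hF2]; split
          · exact hv
          · simp
        have h2 : (0:ℝ) ≤ if ξ = Function.update α i₀ c then (1:ℝ) else 0 := by positivity
        linarith
      · have hfil : (List.finRange n).filter (fun j => decide (ξ j ≠ α j)) = [i₀] := by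
          refine filter_eq_singleton _ _ (List.nodup_finRange n) i₀ (List.mem_finRange i₀) ?_
          intro j
          rw [decide_eq_true_eq]
          constructor
          · intro hj; by_contra hji; exact hj (hcase j hji)
          · rintro rfl; exact h0
        have hdg : dGamma α (fun j => decide (ξ j ≠ α j)) F2 ξ
            = F2 ξ - F2 (ξ - Pi.single i₀ 1) := by
          rw [dGamma, hfil]
          simp only [List.foldr_cons, List.foldr_nil, dOp, if_neg h0]
        have he : (ξ - Pi.single i₀ 1 : Fin n → ℤ) i₀ = ξ i₀ - 1 := by simp
        by_cases hc' : ξ i₀ = c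
        · have hupd : ξ = Function.update α i₀ c := funext fun j => by
            by_cases hj : j = i₀
            · subst hj; rw [Function.update_self]; exact hc'
            · rw [Function.update_of_ne hj]; exact hcase j hj
          rw [hdg]
          have : ‖F2 ξ - F2 (ξ - Pi.single i₀ 1)‖ ≤ 1 := by
            simp only [hF2, he, hc']
            rw [if_pos (le_refl c), if_neg (by omega)]
            simpa using hv
          have h2 : (0:ℝ) ≤ if ξ = α then (1:ℝ) else 0 := by positivity
          rw [if_pos hupd]
          linarith
        · rw [hdg]
          have : F2 ξ - F2 (ξ - Pi.single i₀ 1) = 0 := by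
            simp only [hF2, he]
            by_cases hle : c ≤ ξ i₀
            · rw [if_pos hle, if_pos (by omega), sub_self]
            · rw [if_neg hle, if_neg (by omega), sub_self]
          rw [this, norm_zero]
          positivity
  calc varBox α β M ≤ ∑ ξ ∈ Finset.Icc α β,
        ((if ξ = α then (1:ℝ) else 0) + (if ξ = Function.update α i₀ c then (1:ℝ) else 0)) :=
        Finset.sum_le_sum key
    _ ≤ 2 := by
        rw [Finset.sum_add_distrib]
        have h1 := Finset.sum_ite_eq' (Finset.Icc α β) α (fun _ => (1:ℝ))
        have h2 := Finset.sum_ite_eq' (Finset.Icc α β) (Function.update α i₀ c) (fun _ => (1:ℝ))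
        rw [h1, h2]
        split_ifs <;> norm_num

end Part2
section Part3

/-- The sup-norm dyadic shell level of `k ∈ ℤⁿ`. -/
noncomputable def shellOf {n : ℕ} (k : Fin n → ℤ) : ℕ :=
  Nat.log 2 (Finset.univ.sup fun i => (k i).natAbs)

/-- The shell-adapted Riesz-type multiplier. -/
noncomputable def myM (n : ℕ) (i₀ : Fin n) (E : Type*) [NormedAddCommGroup E]
    [NormedSpace ℂ E] : (Fin n → ℤ) → (E →L[ℂ] E) :=
  fun k => if (5 * 2 ^ (shellOf k - 2) : ℤ) ≤ k i₀ then ContinuousLinearMap.id ℂ E else 0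

lemma myM_norm_le {n : ℕ} (i₀ : Fin n) (E : Type*) [NormedAddCommGroup E] [NormedSpace ℂ E]
    (k : Fin n → ℤ) : ‖myM n i₀ E k‖ ≤ 1 := by
  unfold myM
  split
  · exact ContinuousLinearMap.norm_id_le
  · simp

lemma shellOf_eq {n : ℕ} (k : Fin n → ℤ) (r : ℕ) (i : Fin n)
    (hlow : 2 ^ r ≤ (k i).natAbs) (hhigh : ∀ i', (k i').natAbs < 2 ^ (r + 1)) :
    shellOf k = r := by
  unfold shellOf
  refine Nat.log_eq_of_pow_le_of_lt_pow ?_ ?_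
  · exact le_trans hlow (Finset.le_sup (f := fun i => (k i).natAbs) (Finset.mem_univ i))
  · exact (Finset.sup_lt_iff (by positivity)).mpr (fun i' _ => hhigh i')

lemma shellOf_boxPlus {n : ℕ} (hn : 0 < n) (d : ℕ) (hd : d ≠ 0) (y : Fin n → ℤ)
    (hy : y ∈ Finset.Icc (boxPlusLo n d) (boxPlusHi n d)) : shellOf y = (d - 1) / n := by
  set r := (d - 1) / n with hr
  set l : Fin n := ⟨(d - 1) % n, Nat.mod_lt _ hn⟩ with hl
  have hy' := Finset.mem_Icc.mp hy
  have hP : (1 : ℤ) ≤ 2 ^ r := one_le_pow₀ one_le_two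
  have hPQ : (2 : ℤ) ^ (r + 1) = 2 * 2 ^ r := by rw [pow_succ]; ring
  have hcast : ((2 ^ r : ℕ) : ℤ) = 2 ^ r := by push_cast; ring
  have hcast2 : ((2 ^ (r + 1) : ℕ) : ℤ) = 2 ^ (r + 1) := by push_cast; ring
  refine shellOf_eq y r l ?_ ?_
  · have h1 : boxPlusLo n d l ≤ y l := hy'.1 l
    have h2 : boxPlusLo n d l = 2 ^ r := by
      unfold boxPlusLo
      rw [if_neg (lt_irrefl _), if_pos rfl]
  -- conclude 2 ^ r ≤ natAbs (y l)
    rw [h2] at h1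
    omega
  · intro i'
    have h1 : boxPlusLo n d i' ≤ y i' := hy'.1 i'
    have h2 : y i' ≤ boxPlusHi n d i' := hy'.2 i'
    have h3 : -(2 ^ (r + 1)) + 1 ≤ boxPlusLo n d i' := by
      unfold boxPlusLo
      simp only [← hr]
      split_ifs <;> omega
    have h4 : boxPlusHi n d i' ≤ 2 ^ (r + 1) - 1 := by
      unfold boxPlusHi
      simp only [← hr]
      split_ifs <;> omega
    omega

lemma shellOf_boxMinus {n : ℕ} (hn : 0 < n) (d : ℕ) (hd : d ≠ 0) (y : Fin n → ℤ)
    (hy : y ∈ Finset.Icc (boxMinusLo n d) (boxMinusHi n d)) : shellOf y = (d - 1) / n := by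
  set r := (d - 1) / n with hr
  set l : Fin n := ⟨(d - 1) % n, Nat.mod_lt _ hn⟩ with hl
  have hy' := Finset.mem_Icc.mp hy
  have hP : (1 : ℤ) ≤ 2 ^ r := one_le_pow₀ one_le_two
  have hPQ : (2 : ℤ) ^ (r + 1) = 2 * 2 ^ r := by rw [pow_succ]; ring
  have hcast : ((2 ^ r : ℕ) : ℤ) = 2 ^ r := by push_cast; ring
  have hcast2 : ((2 ^ (r + 1) : ℕ) : ℤ) = 2 ^ (r + 1) := by push_cast; ring
  refine shellOf_eq y r l ?_ ?_
  · have h1 : y l ≤ boxMinusHi n d l := hy'.2 l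
    have h2 : boxMinusHi n d l = -(2 ^ r) := by
      unfold boxMinusHi
      rw [if_neg (lt_irrefl _), if_pos rfl]
    rw [h2] at h1
    omega
  · intro i'
    have h1 : boxMinusLo n d i' ≤ y i' := hy'.1 i'
    have h2 : y i' ≤ boxMinusHi n d i' := hy'.2 i'
    have h3 : -(2 ^ (r + 1)) + 1 ≤ boxMinusLo n d i' := by
      unfold boxMinusLo
      simp only [← hr]
      split_ifs <;> omega
    have h4 : boxMinusHi n d i' ≤ 2 ^ (r + 1) - 1 := by
      unfold boxMinusHi
      simp only [← hr]
      split_ifs <;> omega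
    omega

lemma varD_myM_le {n : ℕ} (hn : 0 < n) (i₀ : Fin n) (E : Type*) [NormedAddCommGroup E]
    [NormedSpace ℂ E] (d : ℕ) : varD n d (myM n i₀ E) ≤ 4 := by
  unfold varD
  split_ifs with hd
  · have h := varBox_le_two (0 : Fin n → ℤ) 0 (myM n i₀ E) i₀ 5
      (ContinuousLinearMap.id ℂ E) ContinuousLinearMap.norm_id_le ?_
    · linarith
    · intro y hy
      have hy0 : y = 0 := by
        have := Finset.mem_Icc.mp hy
        exact le_antisymm (this.2) (this.1)
      subst hy0
      have hs : shellOf (0 : Fin n → ℤ) = 0 := by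
        unfold shellOf
        have : (Finset.univ.sup fun i : Fin n => ((0 : Fin n → ℤ) i).natAbs) = 0 := by
          simp
        rw [this]
        exact Nat.log_zero_right 2
      unfold myM
      rw [hs]
      norm_num
  · have h1 := varBox_le_two (boxPlusLo n d) (boxPlusHi n d) (myM n i₀ E) i₀
      (5 * 2 ^ ((d - 1) / n - 2)) (ContinuousLinearMap.id ℂ E) ContinuousLinearMap.norm_id_le
      (fun y hy => by unfold myM; rw [shellOf_boxPlus hn d hd y hy])
    have h2 := varBox_le_two (boxMinusLo n d) (boxMinusHi n d) (myM n i₀ E) i₀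
      (5 * 2 ^ ((d - 1) / n - 2)) (ContinuousLinearMap.id ℂ E) ContinuousLinearMap.norm_id_le
      (fun y hy => by unfold myM; rw [shellOf_boxMinus hn d hd y hy])
    linarith

end Part3
section Part4

variable {E : Type*} [NormedAddCommGroup E] [NormedSpace ℂ E]

lemma pnorm_nonneg (n : ℕ) (p : ℝ) (g : (Fin n → ℝ) → E) : 0 ≤ pnorm n p g := by
  unfold pnorm
  apply Real.rpow_nonneg
  apply mul_nonneg
  · positivity
  · apply MeasureTheory.integral_nonneg
    intro t
    positivity

lemma pnorm_zero_fun (n : ℕ) (p : ℝ) (hp : p ≠ 0) : pnorm n p (fun _ => (0 : E)) = 0 := by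
  unfold pnorm
  have : (fun t : Fin n → ℝ => ‖(0 : E)‖ ^ p) = fun _ => (0 : ℝ) := by
    funext t
    rw [norm_zero, Real.zero_rpow hp]
  rw [this, MeasureTheory.integral_zero, mul_zero, Real.zero_rpow (one_div_ne_zero hp)]

lemma eq_zero_of_hasSum_one {f : ℕ → ℝ} (hf : HasSum f 1) (hnn : ∀ i, 0 ≤ f i) {j : ℕ}
    (hj : f j = 1) {j' : ℕ} (hj' : j' ≠ j) : f j' = 0 := by
  have hs := hf.summable
  have h2 : f j + f j' ≤ 1 := by
    have h := Summable.sum_le_tsum ({j, j'} : Finset ℕ) (fun i _ => hnn i) hs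
    rwa [Finset.sum_pair (Ne.symm hj'), hf.tsum_eq] at h
  have := hnn j'
  linarith

lemma besov_collapse {n : ℕ} (s p : ℝ) (hp : 1 < p) (q : ℝ≥0∞) (hq : 1 ≤ q)
    (φ : ℕ → SchwartzMap (EuclideanSpace ℝ (Fin n)) ℝ)
    (x : (Fin n → ℤ) → E) (j : ℕ)
    (h1 : ∀ k, x k ≠ 0 → φ j (zToR n k) = 1)
    (h0 : ∀ j', j' ≠ j → ∀ k, x k ≠ 0 → φ j' (zToR n k) = 0) :
    besov n s p q φ x
      = 2 ^ (s * (j : ℝ)) * pnorm n p (fun t => ∑ᶠ k, ek n k t • x k) := by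
  classical
  have hp0 : p ≠ 0 := by linarith
  set A : ℝ := 2 ^ (s * (j : ℝ)) * pnorm n p (fun t => ∑ᶠ k, ek n k t • x k) with hA
  have hA0 : 0 ≤ A := mul_nonneg (Real.rpow_nonneg (by norm_num) _) (pnorm_nonneg n p _)
  have hterm : ∀ j' : ℕ, (2 : ℝ) ^ (s * (j' : ℝ)) *
      pnorm n p (fun t => ∑ᶠ k, ek n k t • (φ j' (zToR n k) • x k))
      = if j' = j then A else 0 := by
    intro j'
    by_cases hj' : j' = j
    · subst hj'
      rw [if_pos rfl, hA]
      congr 2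
      funext t
      apply finsum_congr
      intro k
      by_cases hk : x k = 0
      · rw [hk, smul_zero, smul_zero]
      · rw [h1 k hk, one_smul]
    · rw [if_neg hj']
      have hz : (fun t : Fin n → ℝ => ∑ᶠ k, ek n k t • (φ j' (zToR n k) • x k))
          = fun _ => (0 : E) := by
        funext t
        have : ∀ k : Fin n → ℤ, ek n k t • (φ j' (zToR n k) • x k) = 0 := by
          intro k
          by_cases hk : x k = 0
          · rw [hk, smul_zero, smul_zero]
          · rw [h0 j' hj' k hk, zero_smul, smul_zero]
        rw [finsum_congr this, finsum_zero]
      rw [hz, pnorm_zero_fun n p hp0, mul_zero]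
  unfold besov
  by_cases hqi : q = ∞
  · rw [if_pos hqi]
    have : (fun j' : ℕ => (2 : ℝ) ^ (s * (j' : ℝ)) *
        pnorm n p (fun t => ∑ᶠ k, ek n k t • (φ j' (zToR n k) • x k)))
        = fun j' => if j' = j then A else 0 := funext hterm
    rw [this]
    apply le_antisymm
    · apply ciSup_le
      intro j'
      split_ifs
      · exact le_refl A
      · exact hA0
    · have hb : BddAbove (Set.range fun j' : ℕ => if j' = j then A else 0) := by
        refine ⟨A, ?_⟩
        rintro - ⟨j', rfl⟩
        dsimp only
        split_ifs
        · exact le_refl A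
        · exact hA0
      have := le_ciSup hb j
      rwa [if_pos rfl] at this
  · rw [if_neg hqi]
    have hqt : 1 ≤ q.toReal := by
      rw [← ENNReal.toReal_one]
      exact ENNReal.toReal_mono hqi hq
    have hqt0 : q.toReal ≠ 0 := by linarith
    have hterm2 : ∀ j' : ℕ, ((2 : ℝ) ^ (s * (j' : ℝ)) *
        pnorm n p (fun t => ∑ᶠ k, ek n k t • (φ j' (zToR n k) • x k))) ^ q.toReal
        = if j' = j then A ^ q.toReal else 0 := by
      intro j'
      rw [hterm j']
      split_ifs
      · rfl
      · exact Real.zero_rpow hqt0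
    calc (∑' j' : ℕ, ((2 : ℝ) ^ (s * (j' : ℝ)) *
          pnorm n p (fun t => ∑ᶠ k, ek n k t • (φ j' (zToR n k) • x k))) ^ q.toReal) ^ (1 / q.toReal)
        = (∑' j' : ℕ, if j' = j then A ^ q.toReal else 0) ^ (1 / q.toReal) := by
          rw [tsum_congr hterm2]
      _ = (A ^ q.toReal) ^ (1 / q.toReal) := by rw [tsum_ite_eq]
      _ = A := by
          rw [← Real.rpow_mul hA0, mul_one_div_cancel hqt0, Real.rpow_one]

lemma pnorm1_congr {p : ℝ} (g g' : ℝ → E) (h : ∀ t, ‖g t‖ = ‖g' t‖) :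
    pnorm1 p g = pnorm1 p g' := by
  unfold pnorm1
  have he : (fun t => ‖g t‖ ^ p) = fun t => ‖g' t‖ ^ p := funext fun t => by rw [h t]
  rw [he]

lemma pnorm_eq_pnorm1 (n : ℕ) (hn : 0 < n) (i₀ : Fin n) (p : ℝ) (G : ℝ → E) :
    pnorm n p (fun t => G (t i₀)) = pnorm1 p G := by
  obtain ⟨m, rfl⟩ : ∃ m, n = m + 1 := ⟨n - 1, by omega⟩
  unfold pnorm pnorm1
  have h2π : (0 : ℝ) < 2 * Real.pi := by positivity
  congr 1
  set I : ℝ := ∫ s in Set.Icc (0 : ℝ) (2 * Real.pi), ‖G s‖ ^ p with hI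
  have key : (∫ t in Set.Icc (0 : Fin (m+1) → ℝ) (fun _ => 2 * Real.pi), ‖G (t i₀)‖ ^ p)
      = (2 * Real.pi) ^ m * I := by
    classical
    set f : Fin (m+1) → ℝ → ℝ := fun i => if i = i₀ then
        Set.indicator (Set.Icc 0 (2 * Real.pi)) (fun s => ‖G s‖ ^ p)
      else Set.indicator (Set.Icc 0 (2 * Real.pi)) (fun _ => 1) with hf
    have hms : MeasurableSet (Set.Icc (0 : Fin (m+1) → ℝ) (fun _ => 2 * Real.pi)) :=
      measurableSet_Icc
    rw [← MeasureTheory.integral_indicator hms]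
    have hfe : ∀ t, (Set.Icc (0 : Fin (m+1) → ℝ) (fun _ => 2 * Real.pi)).indicator
        (fun t => ‖G (t i₀)‖ ^ p) t = ∏ i, f i (t i) := by
      intro t
      by_cases ht : t ∈ Set.Icc (0 : Fin (m+1) → ℝ) fun _ => 2 * Real.pi
      · rw [Set.indicator_of_mem ht]
        have hti : ∀ i, t i ∈ Set.Icc (0 : ℝ) (2 * Real.pi) := by
          rw [← Set.pi_univ_Icc] at ht
          intro i
          exact ht i (Set.mem_univ i)
        rw [Finset.prod_eq_single i₀ ?_ ?_]
        · simp only [hf, if_pos rfl]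
          rw [Set.indicator_of_mem (hti i₀)]
        · intro b _ hb
          simp only [hf, if_neg hb]
          rw [Set.indicator_of_mem (hti b)]
        · intro h
          exact absurd (Finset.mem_univ i₀) h
      · rw [Set.indicator_of_notMem ht]
        rw [← Set.pi_univ_Icc] at ht
        have : ∃ i, t i ∉ Set.Icc (0 : ℝ) (2 * Real.pi) := by
          by_contra hall
          push_neg at hall
          exact ht (fun i _ => hall i)
        obtain ⟨i, hi⟩ := this
        symm
        apply Finset.prod_eq_zero (Finset.mem_univ i)
        by_cases hii : i = i₀
        · simp only [hf, if_pos hii]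
          exact Set.indicator_of_notMem hi _
        · simp only [hf, if_neg hii]
          exact Set.indicator_of_notMem hi _
    calc (∫ t, (Set.Icc (0 : Fin (m+1) → ℝ) (fun _ => 2 * Real.pi)).indicator
            (fun t => ‖G (t i₀)‖ ^ p) t)
        = ∫ t : Fin (m+1) → ℝ, ∏ i, f i (t i) := by
          apply MeasureTheory.integral_congr_ae
          exact Filter.Eventually.of_forall hfe
      _ = ∏ i, ∫ s, f i s := MeasureTheory.integral_fintype_prod_eq_prod f
      _ = (2 * Real.pi) ^ m * I := by
          rw [← Finset.mul_prod_erase Finset.univ _ (Finset.mem_univ i₀)]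
          have hfi : (∫ s, f i₀ s) = I := by
            simp only [hf, if_pos rfl]
            rw [MeasureTheory.integral_indicator measurableSet_Icc]
          have hother : ∀ i ∈ Finset.univ.erase i₀, (∫ s, f i s) = 2 * Real.pi := by
            intro i hi
            have hii := Finset.ne_of_mem_erase hi
            simp only [hf, if_neg hii]
            rw [MeasureTheory.integral_indicator_const (1 : ℝ) measurableSet_Icc]
            rw [Real.volume_real_Icc, smul_eq_mul, mul_one, sub_zero,
              max_eq_left h2π.le]
          rw [Finset.prod_congr rfl hother, Finset.prod_const, hfi]
          rw [Finset.card_erase_of_mem (Finset.mem_univ i₀), Finset.card_univ,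
            Fintype.card_fin, Nat.add_sub_cancel]
          ring
  rw [key]
  have hne : (2 * Real.pi) ≠ 0 := ne_of_gt h2π
  have hpow : (2 * Real.pi) ^ (m + 1) = (2 * Real.pi) * (2 * Real.pi) ^ m := by ring
  rw [hpow, mul_inv]
  field_simp

end Part4
section Part5

lemma norm_ek1 (k : ℤ) (t : ℝ) : ‖ek1 k t‖ = 1 := by
  unfold ek1
  rw [Complex.norm_exp]
  have : (Complex.I * (k : ℂ) * (t : ℂ)).re = 0 := by
    simp [Complex.mul_re, Complex.mul_im]
  rw [this, Real.exp_zero]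

lemma ek1_add (m c : ℤ) (t : ℝ) : ek1 (m + c) t = ek1 c t * ek1 m t := by
  unfold ek1
  rw [← Complex.exp_add]
  congr 1
  push_cast
  ring

lemma ek_single (n : ℕ) (i₀ : Fin n) (m : ℤ) (t : Fin n → ℝ) :
    ek n (Pi.single i₀ m) t = ek1 m (t i₀) := by
  unfold ek ek1
  congr 1
  rw [Finset.sum_eq_single i₀]
  · rw [Pi.single_eq_same]; ring
  · intro b _ hb
    rw [Pi.single_eq_of_ne hb]
    simp
  · intro h
    exact absurd (Finset.mem_univ i₀) h

lemma single_int_injective {n : ℕ} (i₀ : Fin n) : Function.Injective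
    (fun m : ℤ => Pi.single i₀ m : ℤ → (Fin n → ℤ)) := by
  intro a b h
  have := congrFun h i₀
  simpa [Pi.single_eq_same] using this

lemma norm_zToR_single (n : ℕ) (i₀ : Fin n) (m : ℤ) :
    ‖zToR n (Pi.single i₀ m)‖ = |(m : ℝ)| := by
  rw [EuclideanSpace.norm_eq]
  have hco : ∀ i, (zToR n (Pi.single i₀ m)) i = ((Pi.single i₀ m : Fin n → ℤ) i : ℝ) := by
    intro i
    rfl
  have : ∑ i, ‖(zToR n (Pi.single i₀ m)) i‖ ^ 2 = |(m : ℝ)| ^ 2 := by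
    rw [Finset.sum_eq_single i₀]
    · rw [hco i₀, Pi.single_eq_same, Real.norm_eq_abs]
    · intro b _ hb
      rw [hco b, Pi.single_eq_of_ne hb]
      simp
    · intro h
      exact absurd (Finset.mem_univ i₀) h
  rw [this]
  rw [show |(m:ℝ)| ^ 2 = ((m:ℝ))^2 from sq_abs _]
  exact Real.sqrt_sq_eq_abs _

lemma sup_natAbs_single {n : ℕ} (i₀ : Fin n) (m : ℤ) :
    (Finset.univ.sup fun i => ((Pi.single i₀ m : Fin n → ℤ) i).natAbs) = m.natAbs := by
  apply le_antisymm
  · apply Finset.sup_le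
    intro i _
    by_cases hi : i = i₀
    · subst hi; rw [Pi.single_eq_same]
    · rw [Pi.single_eq_of_ne hi]; simp
  · have h := Finset.le_sup (f := fun i => ((Pi.single i₀ m : Fin n → ℤ) i).natAbs)
      (Finset.mem_univ i₀)
    simpa using h

end Part5
section Part6

variable {E : Type*} [NormedAddCommGroup E] [NormedSpace ℂ E]

lemma finsum_single_eq {n : ℕ} (i₀ : Fin n) (Z : ℤ → E) (T : Finset ℤ)
    (hT : Function.support Z ⊆ (T : Set ℤ)) (w : (Fin n → ℤ) → E)
    (hw : ∀ m, w (Pi.single i₀ m) = Z m)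
    (hwsupp : ∀ k, w k ≠ 0 → k = Pi.single i₀ (k i₀)) (t : Fin n → ℝ) :
    ∑ᶠ k, ek n k t • w k = ∑ᶠ m, ek1 m (t i₀) • Z m := by
  classical
  have hsub : Function.support (fun k => ek n k t • w k)
      ⊆ ((T.image (Pi.single i₀) : Finset (Fin n → ℤ)) : Set (Fin n → ℤ)) := by
    intro k hk
    have hwk : w k ≠ 0 := by
      intro h
      apply hk
      simp [Function.mem_support, h]
    have hk1 := hwsupp k hwk
    have hZ : Z (k i₀) ≠ 0 := by
      rw [← hw (k i₀), ← hk1]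
      exact hwk
    simp only [Finset.coe_image, Set.mem_image]
    exact ⟨k i₀, hT hZ, hk1.symm⟩
  rw [finsum_eq_sum_of_support_subset _ hsub]
  rw [Finset.sum_image (fun a _ b _ h => single_int_injective i₀ h)]
  have hsub2 : Function.support (fun m => ek1 m (t i₀) • Z m) ⊆ (T : Set ℤ) := by
    intro m hm
    have : Z m ≠ 0 := by
      intro h
      apply hm
      simp [Function.mem_support, h]
    exact hT this
  rw [finsum_eq_sum_of_support_subset _ hsub2]
  apply Finset.sum_congr rfl
  intro m _
  rw [ek_single, hw]

lemma norm_finsum_modulate (S : Finset ℤ) (g : ℤ → E)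
    (hg : Function.support g ⊆ (S : Set ℤ)) (c : ℤ) (t : ℝ) :
    ‖∑ᶠ m, ek1 m t • g (m - c)‖ = ‖∑ᶠ m, ek1 m t • g m‖ := by
  classical
  have hsub : Function.support (fun m => ek1 m t • g (m - c))
      ⊆ ((S.image (· + c) : Finset ℤ) : Set ℤ) := by
    intro m hm
    have : g (m - c) ≠ 0 := by
      intro h
      apply hm
      simp [Function.mem_support, h]
    simp only [Finset.coe_image, Set.mem_image]
    exact ⟨m - c, hg this, by ring⟩
  rw [finsum_eq_sum_of_support_subset _ hsub]
  rw [Finset.sum_image (fun a _ b _ h => by omega)]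
  have hcongr : ∀ m ∈ S, ek1 (m + c) t • g (m + c - c) = ek1 c t • (ek1 m t • g m) := by
    intro m _
    rw [ek1_add, mul_smul, add_sub_cancel_right]
  rw [Finset.sum_congr rfl hcongr, ← Finset.smul_sum]
  rw [norm_smul, norm_ek1, one_mul]
  rw [finsum_eq_sum_of_support_subset _ (fun m hm => hg (by
    intro h
    apply hm
    simp [Function.mem_support, h]))]

end Part6
/-- The necessity part of Theorem 5.9 (the main result): if every uniformly bounded
`M : ℤⁿ → 𝓛(E)` of bounded variation with respect to the coarse decomposition is a
Fourier multiplier on `B^s_{p,q}(𝕋ⁿ,E)` (with `(φ_j)` the resolution of unity of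
Lemma 3.1, i.e. satisfying (a)–(d)), then the one-dimensional Riesz projection is
`L^p(𝕋,E)`-bounded, i.e. `E` is a UMD space. -/
theorem statement14 (n : ℕ) (hn : 0 < n) (s : ℝ) (p : ℝ) (hp : 1 < p)
    (q : ℝ≥0∞) (hq : 1 ≤ q) (E : Type*) [NormedAddCommGroup E] [NormedSpace ℂ E]
    (φ : ℕ → SchwartzMap (EuclideanSpace ℝ (Fin n)) ℝ)
    (hφ : IsResolution n φ)
    (hφa : ∀ j ξ, 0 ≤ φ j ξ)
    (hφb : ∀ j, tsupport (φ j) ⊂ OmegaSet n j)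
    (hφc : ∀ j, 3 ≤ j → ∀ ξ : EuclideanSpace ℝ (Fin n),
      ‖ξ‖ ∈ Set.Icc ((7 : ℝ) * 2 ^ (j - 3)) ((3 : ℝ) * 2 ^ (j - 1)) → φ j ξ = 1)
    (hφd : ∀ j, 3 ≤ j → ∀ ξ : EuclideanSpace ℝ (Fin n),
      ‖ξ‖ ∈ Set.Icc ((7 : ℝ) * 2 ^ (j - 3)) ((3 : ℝ) * 2 ^ (j - 1)) →
        ξ ∉ tsupport (φ (j - 1)) ∩ tsupport (φ (j + 1)))
    (hmult : ∀ M : (Fin n → ℤ) → (E →L[ℂ] E), (∃ B : ℝ, ∀ k, ‖M k‖ ≤ B) →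
      (∃ C_M : ℝ, ∀ d : ℕ, varD n d M ≤ C_M) →
      ∃ C > (0 : ℝ), ∀ x : (Fin n → ℤ) → E, (Function.support x).Finite →
        besov n s p q φ (fun k => (M k) (x k)) ≤ C * besov n s p q φ x) :
    ∃ C_p > (0 : ℝ), ∀ y : ℤ → E, (Function.support y).Finite →
      pnorm1 p (fun t => ∑ᶠ k : ℤ, if 0 ≤ k then ek1 k t • y k else 0) ≤
        C_p * pnorm1 p (fun t => ∑ᶠ k : ℤ, ek1 k t • y k) := by
  classical
  set i₀ : Fin n := ⟨0, hn⟩ with hi₀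
  obtain ⟨C, hC0, hC⟩ := hmult (myM n i₀ E) ⟨1, myM_norm_le i₀ E⟩
    ⟨4, varD_myM_le hn i₀ E⟩
  refine ⟨C, hC0, ?_⟩
  intro y hy
  set N : ℕ := hy.toFinset.sup (fun m => m.natAbs) with hNdef
  have hNy : ∀ m : ℤ, y m ≠ 0 → m.natAbs ≤ N := by
    intro m hm
    exact Finset.le_sup (f := fun m : ℤ => m.natAbs) ((Set.Finite.mem_toFinset hy).mpr hm)
  set c : ℤ := 5 * 2 ^ (N + 1) with hcdef
  set j : ℕ := N + 3 with hjdef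
  set Y : ℤ → E := fun m => y (m - c) with hYdef
  set x : (Fin n → ℤ) → E := fun k => if k = Pi.single i₀ (k i₀) then Y (k i₀) else 0
    with hxdef
  -- arithmetic facts
  have hpowN : ((N : ℤ)) < 2 ^ N := by exact_mod_cast Nat.lt_two_pow_self
  have hpows : (2 : ℤ) ^ (N + 1) = 2 * 2 ^ N := by rw [pow_succ]; ring
  have hpow2 : (1 : ℤ) ≤ 2 ^ N := one_le_pow₀ one_le_two
  -- range of nonzero Y
  have hc10 : c = 10 * 2 ^ N := by rw [hcdef, hpows]; ring
  have hYrange : ∀ m : ℤ, Y m ≠ 0 → c - N ≤ m ∧ m ≤ c + N := by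
    intro m hm
    have := hNy (m - c) hm
    omega
  -- shell value on the band
  have hshell : ∀ m : ℤ, c - N ≤ m → m ≤ c + N → shellOf (Pi.single i₀ m : Fin n → ℤ) = j := by
    intro m h1 h2
    unfold shellOf
    rw [sup_natAbs_single, hjdef]
    refine Nat.log_eq_of_pow_le_of_lt_pow ?_ ?_
    · have e1 : ((2 ^ (N + 3) : ℕ) : ℤ) = 8 * 2 ^ N := by push_cast; ring
      omega
    · have e2 : ((2 ^ (N + 3 + 1) : ℕ) : ℤ) = 16 * 2 ^ N := by push_cast; ring
      omega
  -- action of the multiplier on x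
  have hMapp : ∀ k, (myM n i₀ E k) (x k) = if c ≤ k i₀ then x k else 0 := by
    intro k
    by_cases hxk : x k = 0
    · rw [hxk, map_zero, ite_self]
    · have hcond : k = Pi.single i₀ (k i₀) ∧ Y (k i₀) ≠ 0 := by
        by_cases h : k = Pi.single i₀ (k i₀)
        · refine ⟨h, ?_⟩
          intro hYz
          apply hxk
          rw [hxdef]
          simp only [if_pos h, hYz]
        · exact absurd (by rw [hxdef]; simp only [if_neg h]) hxk
      obtain ⟨hrl, hrh⟩ := hYrange (k i₀) hcond.2
      have hsk : shellOf k = j := by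
        have h1 := hcond.1
        rw [h1]
        exact hshell _ hrl hrh
      unfold myM
      rw [hsk]
      have : (5 * 2 ^ (j - 2) : ℤ) = c := by
        rw [hcdef, hjdef]
        have h32 : N + 3 - 2 = N + 1 := by omega
        rw [h32]
      rw [this]
      split_ifs with h
      · rfl
      · rfl
  -- finiteness of supports
  have hYfin : (Function.support Y).Finite := by
    apply Set.Finite.subset (hy.image (fun m => m + c))
    intro m hm
    exact ⟨m - c, hm, by ring⟩
  have hxfin : (Function.support x).Finite := by
    apply Set.Finite.subset (hYfin.image (Pi.single i₀))
    intro k hk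
    have hcond : k = Pi.single i₀ (k i₀) ∧ Y (k i₀) ≠ 0 := by
      by_cases h : k = Pi.single i₀ (k i₀)
      · refine ⟨h, fun hYz => hk ?_⟩
        rw [hxdef]
        simp only [if_pos h, hYz]
      · exact absurd (by rw [hxdef]; simp only [if_neg h]) hk
    exact ⟨k i₀, hcond.2, hcond.1.symm⟩
  -- φ facts on the band
  have hband : ∀ m : ℤ, c - N ≤ m → m ≤ c + N →
      ‖zToR n (Pi.single i₀ m : Fin n → ℤ)‖ ∈
        Set.Icc ((7 : ℝ) * 2 ^ (j - 3)) ((3 : ℝ) * 2 ^ (j - 1)) := by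
    intro m h1 h2
    rw [norm_zToR_single]
    have hm0 : (0 : ℤ) < m := by omega
    have hlo : (7 * 2 ^ N : ℤ) ≤ m := by omega
    have hhi : (m : ℤ) ≤ 3 * 2 ^ (N + 2) := by
      have : (2 : ℤ) ^ (N + 2) = 4 * 2 ^ N := by rw [pow_add]; ring
      omega
    have hj3 : j - 3 = N := by rw [hjdef]; omega
    have hj1 : j - 1 = N + 2 := by rw [hjdef]; omega
    rw [hj3, hj1, abs_of_pos (by exact_mod_cast hm0)]
    constructor
    · exact_mod_cast hlo
    · exact_mod_cast hhi
  have hsuppm : ∀ k : Fin n → ℤ, x k ≠ 0 →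
      ∃ m : ℤ, k = Pi.single i₀ m ∧ c - N ≤ m ∧ m ≤ c + N := by
    intro k hk
    have hcond : k = Pi.single i₀ (k i₀) ∧ Y (k i₀) ≠ 0 := by
      by_cases h : k = Pi.single i₀ (k i₀)
      · refine ⟨h, fun hYz => hk ?_⟩
        rw [hxdef]
        simp only [if_pos h, hYz]
      · exact absurd (by rw [hxdef]; simp only [if_neg h]) hk
    obtain ⟨hrl, hrh⟩ := hYrange (k i₀) hcond.2
    exact ⟨k i₀, hcond.1, hrl, hrh⟩
  have hφone : ∀ k, x k ≠ 0 → φ j (zToR n k) = 1 := by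
    intro k hk
    obtain ⟨m, rfl, h1, h2⟩ := hsuppm k hk
    exact hφc j (by rw [hjdef]; omega) _ (hband m h1 h2)
  have hφzero : ∀ j', j' ≠ j → ∀ k, x k ≠ 0 → φ j' (zToR n k) = 0 := by
    intro j' hj' k hk
    exact eq_zero_of_hasSum_one (hφ.2.1 (zToR n k)) (fun i => hφa i (zToR n k))
      (hφone k hk) hj'
  -- the multiplied family
  set Z : ℤ → E := fun m => if c ≤ m then Y m else 0 with hZdef
  have hMx_ne : ∀ k, (myM n i₀ E k) (x k) ≠ 0 → x k ≠ 0 := by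
    intro k h hx0
    apply h
    rw [hx0, map_zero]
  -- besov collapse for x and Mx
  have hbx := besov_collapse s p hp q hq φ x j hφone hφzero
  have hbMx := besov_collapse s p hp q hq φ (fun k => (myM n i₀ E k) (x k)) j
    (fun k hk => hφone k (hMx_ne k hk)) (fun j' hj' k hk => hφzero j' hj' k (hMx_ne k hk))
  have hineq := hC x hxfin
  rw [hbx, hbMx] at hineq
  have h2sj : (0 : ℝ) < 2 ^ (s * (j : ℝ)) := Real.rpow_pos_of_pos two_pos _
  rw [mul_left_comm] at hineq
  have hPP := le_of_mul_le_mul_left hineq h2sj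
  -- identify the n-dimensional pnorms with 1-dimensional ones
  have hIdX : ∀ t : Fin n → ℝ, ∑ᶠ k, ek n k t • x k = ∑ᶠ m, ek1 m (t i₀) • Y m := by
    intro t
    apply finsum_single_eq i₀ Y hYfin.toFinset (by rw [Set.Finite.coe_toFinset]) x
    · intro m
      rw [hxdef]
      simp [Pi.single_eq_same]
    · intro k hk
      by_cases h : k = Pi.single i₀ (k i₀)
      · exact h
      · exact absurd (by rw [hxdef]; simp only [if_neg h]) hk
  have hIdM : ∀ t : Fin n → ℝ, ∑ᶠ k, ek n k t • (myM n i₀ E k) (x k)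
      = ∑ᶠ m, ek1 m (t i₀) • Z m := by
    intro t
    apply finsum_single_eq i₀ Z hYfin.toFinset ?_ (fun k => (myM n i₀ E k) (x k))
    · intro m
      rw [hMapp, Pi.single_eq_same]
      have hxs : x (Pi.single i₀ m) = Y m := by
        rw [hxdef]
        simp [Pi.single_eq_same]
      simp only [hZdef]
      rw [hxs]
    · intro k hk
      have hxk := hMx_ne k hk
      by_cases h : k = Pi.single i₀ (k i₀)
      · exact h
      · exact absurd (by rw [hxdef]; simp only [if_neg h]) hxk
    · intro m hm
      have : Y m ≠ 0 := by
        intro h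
        apply hm
        rw [hZdef]
        simp [h]
      simpa using this
  have eX : pnorm n p (fun t => ∑ᶠ k, ek n k t • x k)
      = pnorm1 p (fun u => ∑ᶠ m, ek1 m u • Y m) := by
    rw [show (fun t : Fin n → ℝ => ∑ᶠ k, ek n k t • x k)
        = fun t => (fun u => ∑ᶠ m, ek1 m u • Y m) (t i₀) from funext fun t => hIdX t]
    exact pnorm_eq_pnorm1 n hn i₀ p (fun u => ∑ᶠ m, ek1 m u • Y m)
  have eM : pnorm n p (fun t => ∑ᶠ k, ek n k t • (myM n i₀ E k) (x k))
      = pnorm1 p (fun u => ∑ᶠ m, ek1 m u • Z m) := by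
    rw [show (fun t : Fin n → ℝ => ∑ᶠ k, ek n k t • (myM n i₀ E k) (x k))
        = fun t => (fun u => ∑ᶠ m, ek1 m u • Z m) (t i₀) from funext fun t => hIdM t]
    exact pnorm_eq_pnorm1 n hn i₀ p (fun u => ∑ᶠ m, ek1 m u • Z m)
  rw [eX, eM] at hPP
  -- now identify the 1-dimensional pnorms with the goal
  have hIII : pnorm1 p (fun u => ∑ᶠ m, ek1 m u • Y m)
      = pnorm1 p (fun t => ∑ᶠ k : ℤ, ek1 k t • y k) := by
    apply pnorm1_congr
    intro t
    have : (fun m : ℤ => ek1 m t • Y m) = fun m => ek1 m t • y (m - c) := by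
      funext m
      simp only [hYdef]
    rw [this]
    exact norm_finsum_modulate hy.toFinset y (by simp) c t
  have hIV : pnorm1 p (fun u => ∑ᶠ m, ek1 m u • Z m)
      = pnorm1 p (fun t => ∑ᶠ k : ℤ, if 0 ≤ k then ek1 k t • y k else 0) := by
    apply pnorm1_congr
    intro t
    set g : ℤ → E := fun m => if 0 ≤ m then y m else 0 with hgdef
    have h1 : (fun m : ℤ => ek1 m t • Z m) = fun m => ek1 m t • g (m - c) := by
      funext m
      simp only [hZdef, hgdef, hYdef]
      congr 1
      by_cases h : c ≤ m
      · rw [if_pos h, if_pos (by omega)]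
      · rw [if_neg h, if_neg (by omega)]
    rw [h1]
    have h2 := norm_finsum_modulate hy.toFinset g (by
      intro m hm
      have : y m ≠ 0 := by
        intro h
        apply hm
        simp only [hgdef]
        simp [h]
      simpa using this) c t
    rw [h2]
    congr 1
    apply finsum_congr
    intro m
    simp only [hgdef]
    by_cases h : 0 ≤ m
    · rw [if_pos h, if_pos h]
    · rw [if_neg h, if_neg h, smul_zero]
  rw [hIII] at hPP
  rw [hIV] at hPP
  exact hPP
end
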